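/- arXiv:1210.7741 — 6 statements merged into one kernel-verified Lean document; each statement's English description precedes it below -/
import Mathlib

section
/- There exists a constant c > 0 (depending only on the dimension d) such that for every integer N ≥ 1, every multi-index α with |α| ≤ N, and every x ∈ ℝ^d, one has e^{|x|²/(8N)} · |∂^α E_N(x)| ≤ (c/√N)^{|α|} · α^{α/2}, where E_N(x) = e^{-|x|²/(4N)}. In particular |∂^α E_N(x)| ≤ (c/√N)^{|α|} α^{α/2} for all such x, α, N. (One may take c = 1.) -/
open MeasureTheory Real

/-- The Gaussian window `E_N(x) = e^{-|x|²/(4N)}`. -/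
noncomputable def EGaussR (d N : ℕ) (x : EuclideanSpace ℝ (Fin d)) : ℝ :=
  Real.exp (-(‖x‖ ^ 2) / (4 * N))

/-- Partial derivative in the `k`-th coordinate direction. -/
noncomputable def pderivR (d : ℕ) (k : Fin d) (f : EuclideanSpace ℝ (Fin d) → ℝ) :
    EuclideanSpace ℝ (Fin d) → ℝ :=
  fun x => fderiv ℝ f x (EuclideanSpace.single k 1)

/-- The multi-index partial derivative `∂^α f`. -/
noncomputable def pderivMultiR (d : ℕ) (α : Fin d → ℕ) (f : EuclideanSpace ℝ (Fin d) → ℝ) :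
    EuclideanSpace ℝ (Fin d) → ℝ :=
  (List.finRange d).foldr (fun k g => (pderivR d k)^[α k] g) f

/-!
`E_N` is a product of one-dimensional Gaussians `g(t) = e^{-t²/(4N)}` in the coordinates, so
`∂^α E_N(x) = ∏ᵢ g^{(αᵢ)}(xᵢ)`, and the weight `e^{|x|²/(8N)}` factorises as well; it suffices to
bound each factor. In one variable, `g` is the restriction of the entire function `e^{-z²/(4N)}`,
and Cauchy's estimate on the circle of radius `R = √(nN)` about `t` gives
`|g^{(n)}(t)| ≤ n! e^{(-t² + 2|t|R + R²)/(4N)} / R^n`. After multiplying by `e^{t²/(8N)}` the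
exponent is at most `3R²/(4N) = 3n/4`, and `n! e^{3n/4} / R^n ≤ (3/√N)^n n^{n/2}`.
-/

open scoped ContDiff

theorem iterate_deriv_re_ofReal {F : ℂ → ℂ} (hF : Differentiable ℂ F) (n : ℕ) (t : ℝ) :
    deriv^[n] (fun s : ℝ => (F s).re) t = (deriv^[n] F t).re := by
  induction n generalizing F with
  | zero => rfl
  | succ n ih =>
    have hderiv : deriv (fun s : ℝ => (F s).re) = fun s : ℝ => (deriv F s).re :=
      funext fun s => (hF s).hasDerivAt.real_of_complex.deriv
    rw [Function.iterate_succ_apply, Function.iterate_succ_apply, hderiv, ih hF.deriv]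

theorem sq_sub_le_re_sq {z : ℂ} {t R : ℝ} (hz : ‖z - t‖ ≤ R) :
    t ^ 2 - 2 * |t| * R - R ^ 2 ≤ (z ^ 2).re := by
  have hre : |z.re - t| ≤ R := by
    simpa using (Complex.abs_re_le_norm (z - t)).trans hz
  have him : |z.im| ≤ R := by
    simpa using (Complex.abs_im_le_norm (z - t)).trans hz
  have hcross : -(|t| * R) ≤ t * (z.re - t) :=
    calc -(|t| * R) ≤ -(|t| * |z.re - t|) := by gcongr
      _ = -|t * (z.re - t)| := by rw [abs_mul]
      _ ≤ t * (z.re - t) := neg_abs_le _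
  rw [pow_two z, Complex.mul_re]
  nlinarith [abs_nonneg t, sq_abs z.im, abs_nonneg z.im, sq_nonneg (z.re - t)]

theorem abs_iterate_deriv_gaussian_le {N R : ℝ} (hN : 0 ≤ N) (hR : 0 < R) (n : ℕ) (t : ℝ) :
    |deriv^[n] (fun s : ℝ => exp (-(s ^ 2) / (4 * N))) t| ≤
      n.factorial * exp ((-t ^ 2 + 2 * |t| * R + R ^ 2) / (4 * N)) / R ^ n := by
  set G : ℂ → ℂ := fun z => Complex.exp (-(z ^ 2) / (4 * N))
  have hG : Differentiable ℂ G := by fun_prop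
  have hGre : (fun s : ℝ => (G s).re) = fun s => exp (-(s ^ 2) / (4 * N)) := by
    funext s
    rw [← Complex.exp_ofReal_re]
    push_cast
    rfl
  have hsphere : ∀ z ∈ Metric.sphere (t : ℂ) R,
      ‖G z‖ ≤ exp ((-t ^ 2 + 2 * |t| * R + R ^ 2) / (4 * N)) := by
    intro z hz
    have hre : (-(z ^ 2) / (4 * N)).re = -(z ^ 2).re / (4 * N) := by
      rw [show (4 * N : ℂ) = ((4 * N : ℝ) : ℂ) by push_cast; rfl, Complex.div_ofReal_re,
        Complex.neg_re]
    rw [Complex.norm_exp, hre]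
    gcongr
    linarith [sq_sub_le_re_sq (mem_sphere_iff_norm.mp hz).le]
  rw [← hGre, iterate_deriv_re_ofReal hG, ← iteratedDeriv_eq_iterate]
  exact (Complex.abs_re_le_norm _).trans
    (Complex.norm_iteratedDeriv_le_of_forall_mem_sphere_norm_le n hR hG.diffContOnCl hsphere)

theorem factorial_mul_exp_le (n : ℕ) : (n.factorial : ℝ) * exp (3 * n / 4) ≤ 3 ^ n * n ^ n := by
  have hexp : exp (3 * n / 4) ≤ 3 ^ n := by
    rw [show 3 * (n : ℝ) / 4 = n * (3 / 4) by ring, exp_nat_mul]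
    gcongr
    calc exp (3 / 4) ≤ exp 1 := exp_le_exp.mpr (by norm_num)
      _ ≤ 3 := by linarith [exp_one_lt_d9]
  rw [mul_comm (3 ^ n : ℝ)]
  exact mul_le_mul (by exact_mod_cast n.factorial_le_pow) hexp (exp_pos _).le (by positivity)

theorem exp_mul_abs_iterate_deriv_gaussian_le {N : ℝ} (hN : 0 < N) (n : ℕ) (t : ℝ) :
    exp (t ^ 2 / (8 * N)) * |deriv^[n] (fun s : ℝ => exp (-(s ^ 2) / (4 * N))) t| ≤
      (3 / √N) ^ n * (n : ℝ) ^ ((n : ℝ) / 2) := by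
  rcases n.eq_zero_or_pos with rfl | hn
  · rw [Function.iterate_zero_apply, abs_of_pos (exp_pos _), ← exp_add]
    simp only [pow_zero, CharP.cast_eq_zero, zero_div, rpow_zero, mul_one, exp_le_one_iff]
    have : 0 ≤ t ^ 2 / (8 * N) := by positivity
    linarith [show -t ^ 2 / (4 * N) = -2 * (t ^ 2 / (8 * N)) by field_simp; ring]
  set R := √(n * N) with hRdef
  have hRpos : 0 < R := sqrt_pos.mpr (by positivity)
  have hR2 : R ^ 2 = n * N := sq_sqrt (by positivity)
  have hweight : exp (t ^ 2 / (8 * N)) * exp ((-t ^ 2 + 2 * |t| * R + R ^ 2) / (4 * N)) ≤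
      exp (3 * n / 4) := by
    rw [← exp_add, exp_le_exp]
    have hnum : -t ^ 2 + 4 * |t| * R + 2 * R ^ 2 ≤ 6 * (n * N) := by
      nlinarith [sq_nonneg (|t| - 2 * R), sq_abs t]
    calc _ = (-t ^ 2 + 4 * |t| * R + 2 * R ^ 2) / (8 * N) := by field_simp; ring
      _ ≤ 6 * (n * N) / (8 * N) := by gcongr
      _ = 3 * n / 4 := by field_simp; ring
  have hRn : R ^ n = √n ^ n * √N ^ n := by rw [hRdef, sqrt_mul (by positivity), mul_pow]
  have hnn : (n : ℝ) ^ n = √n ^ n * √n ^ n := by rw [← mul_pow, mul_self_sqrt n.cast_nonneg]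
  calc exp (t ^ 2 / (8 * N)) * |deriv^[n] (fun s : ℝ => exp (-(s ^ 2) / (4 * N))) t|
      ≤ exp (t ^ 2 / (8 * N)) *
          (n.factorial * exp ((-t ^ 2 + 2 * |t| * R + R ^ 2) / (4 * N)) / R ^ n) := by
        gcongr
        exact abs_iterate_deriv_gaussian_le hN.le hRpos n t
    _ ≤ n.factorial * exp (3 * n / 4) / R ^ n := by
        rw [mul_div_assoc', mul_left_comm]
        gcongr
    _ ≤ 3 ^ n * n ^ n / R ^ n := div_le_div_of_nonneg_right (factorial_mul_exp_le n) (by positivity)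
    _ = (3 / √N) ^ n * (n : ℝ) ^ ((n : ℝ) / 2) := by
        rw [rpow_div_two_eq_sqrt _ n.cast_nonneg, rpow_natCast, hRn, hnn, div_pow]
        have : √(n : ℝ) ^ n ≠ 0 := by positivity
        have : √N ^ n ≠ 0 := by positivity
        field_simp

section ProductFunctions

variable {d : ℕ} {g : Fin d → ℝ → ℝ}

theorem pderivR_prod (hg : ∀ i, Differentiable ℝ (g i)) (k : Fin d) :
    pderivR d k (fun x => ∏ i, g i (x i)) =
      fun x => ∏ i, deriv^[(Pi.single k 1 : Fin d → ℕ) i] (g i) (x i) := by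
  funext x
  have hterm : ∀ i, HasFDerivAt (fun y : EuclideanSpace ℝ (Fin d) => g i (y i))
      (deriv (g i) (x i) • EuclideanSpace.proj i) x := fun i =>
    (hg i (x i)).hasDerivAt.comp_hasFDerivAt x (EuclideanSpace.proj (𝕜 := ℝ) i).hasFDerivAt
  rw [pderivR, (HasFDerivAt.finsetProd fun i _ => hterm i).fderiv,
    ← Finset.mul_prod_erase _ _ (Finset.mem_univ k)]
  simp only [sum_apply, smul_apply, PiLp.proj_apply, PiLp.single_apply, smul_eq_mul, mul_ite,
    mul_one, mul_zero, Finset.sum_ite_eq', Finset.mem_univ, ↓reduceIte, Pi.single_eq_same,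
    Function.iterate_one, Pi.single_apply]
  rw [mul_comm]
  exact congrArg _ (Finset.prod_congr rfl fun i hi => by simp [Finset.ne_of_mem_erase hi])

theorem iterate_pderivR_prod (hg : ∀ i, ContDiff ℝ ∞ (g i)) (k : Fin d) (m : ℕ) :
    (pderivR d k)^[m] (fun x => ∏ i, g i (x i)) =
      fun x => ∏ i, deriv^[(Pi.single k m : Fin d → ℕ) i] (g i) (x i) := by
  induction m with
  | zero => simp
  | succ m ih =>
    have hsmooth : ∀ i, ContDiff ℝ ∞ (deriv^[(Pi.single k m : Fin d → ℕ) i] (g i)) :=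
      fun i => (hg i).iterate_deriv _
    rw [Function.iterate_succ_apply', ih,
      pderivR_prod fun i => (hsmooth i).differentiable (by simp)]
    simp only [← Function.iterate_add_apply, ← Pi.add_apply, ← Pi.single_add, add_comm 1]

theorem pderivMultiR_prod (hg : ∀ i, ContDiff ℝ ∞ (g i)) (α : Fin d → ℕ) :
    pderivMultiR d α (fun x => ∏ i, g i (x i)) = fun x => ∏ i, deriv^[α i] (g i) (x i) := by
  suffices key : ∀ l : List (Fin d), l.foldr (fun k f => (pderivR d k)^[α k] f)
      (fun x => ∏ i, g i (x i)) = fun x => ∏ i, deriv^[l.count i * α i] (g i) (x i) by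
    simp [pderivMultiR, key]
  intro l
  induction l with
  | nil => simp
  | cons k l ih =>
    rw [List.foldr_cons, ih, iterate_pderivR_prod fun i => (hg i).iterate_deriv _]
    funext x
    refine Finset.prod_congr rfl fun i _ => ?_
    rw [← Function.iterate_add_apply, List.count_cons, Pi.single_apply]
    rcases eq_or_ne i k with rfl | hik
    · simp [add_mul, add_comm]
    · simp [hik, hik.symm]

end ProductFunctions

theorem EGaussR_eq_prod (d N : ℕ) :
    EGaussR d N = fun x => ∏ i, exp (-(x i ^ 2) / (4 * N)) := by
  funext x
  rw [EGaussR, ← exp_sum, PiLp.norm_sq_eq_of_L2, ← Finset.sum_neg_distrib, Finset.sum_div]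
  simp only [Real.norm_eq_abs, sq_abs]

/-- There is a constant `c > 0` (one may take `c = 1`), depending only on `d`, such that
`e^{|x|²/(8N)} |∂^α E_N(x)| ≤ (c/√N)^{|α|} α^{α/2}` for `|α| ≤ N`. -/
theorem gaussian_derivative_bound (d : ℕ) :
    ∃ c : ℝ, 0 < c ∧
      ∀ N : ℕ, 1 ≤ N → ∀ α : Fin d → ℕ, (∑ i, α i) ≤ N →
        ∀ x : EuclideanSpace ℝ (Fin d),
          Real.exp (‖x‖ ^ 2 / (8 * N)) * |pderivMultiR d α (EGaussR d N) x| ≤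
            (c / Real.sqrt N) ^ (∑ i, α i) * ∏ i, (α i : ℝ) ^ ((α i : ℝ) / 2) := by
  refine ⟨3, by norm_num, fun N hN α _ x => ?_⟩
  have hNpos : (0 : ℝ) < N := by exact_mod_cast hN
  have hsmooth : ContDiff ℝ ∞ fun s : ℝ => exp (-(s ^ 2) / (4 * N)) := by fun_prop
  rw [EGaussR_eq_prod, pderivMultiR_prod fun _ => hsmooth, PiLp.norm_sq_eq_of_L2,
    Finset.sum_div, exp_sum, Finset.abs_prod, ← Finset.prod_mul_distrib]
  calc ∏ i, exp (‖x i‖ ^ 2 / (8 * N)) *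
        |deriv^[α i] (fun s : ℝ => exp (-(s ^ 2) / (4 * N))) (x i)|
      ≤ ∏ i, (3 / √N) ^ α i * (α i : ℝ) ^ ((α i : ℝ) / 2) :=
        Finset.prod_le_prod (fun _ _ => by positivity) fun i _ => by
          simpa only [Real.norm_eq_abs, sq_abs] using
            exp_mul_abs_iterate_deriv_gaussian_le hNpos (α i) (x i)
    _ = (3 / √N) ^ (∑ i, α i) * ∏ i, (α i : ℝ) ^ ((α i : ℝ) / 2) := by
        rw [Finset.prod_mul_distrib, Finset.prod_pow_eq_pow_sum]
end

section
/- For every n ∈ ℕ and every t ∈ ℝ, the Hermite polynomial H_n satisfies e^{-t²/2} |H_n(t)| ≤ 2^n · n^{n/2} (with the convention 0^0 = 1). -/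
open Real

/-- The physicists' Hermite polynomial via Rodrigues' formula:
`H_n(t) = (-1)^n e^{t²} (d/dt)^n e^{-t²}`. -/
noncomputable def hermiteRodrigues (n : ℕ) (t : ℝ) : ℝ :=
  (-1) ^ n * Real.exp (t ^ 2) * iteratedDeriv n (fun s => Real.exp (-(s ^ 2))) t

open Polynomial

lemma derivative_hermite_succ (n : ℕ) :
    derivative (hermite (n + 1)) = C ((n : ℤ) + 1) * hermite n := by
  induction n with
  | zero => simp [hermite_one, hermite_zero]
  | succ n ih =>
    rw [hermite_succ (n + 1), derivative_sub, derivative_mul, derivative_X, one_mul, ih,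
      derivative_mul, derivative_C, zero_mul, zero_add, hermite_succ n]
    have hC : C ((n : ℤ) + 1 + 1) = C ((n : ℤ) + 1) + 1 := by
      rw [map_add, map_one]
    push_cast
    rw [hC]
    ring

lemma aeval_derivative_hermite_succ (n : ℕ) (x : ℝ) :
    aeval x (derivative (hermite (n + 1))) = ((n : ℝ) + 1) * aeval x (hermite n) := by
  rw [derivative_hermite_succ, map_mul, aeval_C]
  push_cast
  ring

lemma abs_aeval_hermite_le (n : ℕ) (x : ℝ) :
    |(aeval x (hermite n) : ℝ)| ≤ (x ^ 2 + 2 * n) ^ ((n : ℝ) / 2) := by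
  induction n using Nat.twoStepInduction generalizing x with
  | zero => simp
  | one =>
    have h1 : ((1 : ℕ) : ℝ) / 2 = (1 : ℝ) / 2 := by norm_num
    rw [hermite_one, aeval_X]
    rw [show (x ^ 2 + 2 * ((1:ℕ) : ℝ)) ^ (((1:ℕ) : ℝ) / 2) = Real.sqrt (x ^ 2 + 2) by
      rw [Real.sqrt_eq_rpow]; norm_num]
    calc |x| = Real.sqrt (x ^ 2) := (Real.sqrt_sq_eq_abs x).symm
    _ ≤ Real.sqrt (x ^ 2 + 2) := Real.sqrt_le_sqrt (by nlinarith)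
  | more n ih2 ih1 =>
    -- ih2 : bound for n, ih1 : bound for n+1, goal for n+2
    set b : ℝ := x ^ 2 + 2 * ((n : ℝ) + 2) with hb
    have hbpos : (0 : ℝ) < b := by positivity
    have hb0 : (0 : ℝ) ≤ b := hbpos.le
    have ih1' : |(aeval x (hermite (n + 1)) : ℝ)| ≤ b ^ (((n : ℝ) + 1) / 2) := by
      refine (ih1 x).trans ?_
      rw [show (((n + 1 : ℕ)) : ℝ) / 2 = ((n : ℝ) + 1) / 2 by push_cast; ring]
      exact Real.rpow_le_rpow (by positivity) (by rw [hb]; push_cast; nlinarith) (by positivity)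
    have ih2' : |(aeval x (hermite n) : ℝ)| ≤ b ^ ((n : ℝ) / 2) := by
      refine (ih2 x).trans ?_
      exact Real.rpow_le_rpow (by positivity) (by rw [hb]; push_cast; nlinarith) (by positivity)
    have key : |(aeval x (hermite (n + 2)) : ℝ)| ≤
        |x| * b ^ (((n : ℝ) + 1) / 2) + ((n : ℝ) + 1) * b ^ ((n : ℝ) / 2) := by
      rw [hermite_succ (n + 1), map_sub, map_mul, aeval_X, aeval_derivative_hermite_succ]
      refine (abs_sub _ _).trans ?_
      rw [abs_mul, abs_mul, abs_of_nonneg (by positivity : (0:ℝ) ≤ (n : ℝ) + 1)]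
      have h1 := mul_le_mul_of_nonneg_left ih1' (abs_nonneg x)
      have h2 := mul_le_mul_of_nonneg_left ih2' (by positivity : (0:ℝ) ≤ (n : ℝ) + 1)
      linarith
    refine key.trans ?_
    have e1 : b ^ (((n : ℝ) + 1) / 2) = b ^ ((n : ℝ) / 2) * Real.sqrt b := by
      rw [Real.sqrt_eq_rpow, ← Real.rpow_add hbpos]; ring_nf
    have egoal : (x ^ 2 + 2 * ((n + 2 : ℕ) : ℝ)) ^ (((n + 2 : ℕ) : ℝ) / 2)
        = b ^ ((n : ℝ) / 2) * b := by
      push_cast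
      rw [show ((n : ℝ) + 2) / 2 = (n : ℝ) / 2 + 1 by ring, Real.rpow_add hbpos, Real.rpow_one]
    have hxs : |x| * Real.sqrt b ≤ x ^ 2 + (n : ℝ) + 3 := by
      have h1 : |x| * Real.sqrt b = Real.sqrt (x ^ 2 * b) := by
        rw [Real.sqrt_mul (sq_nonneg x), Real.sqrt_sq_eq_abs]
      rw [h1]
      have h2 : x ^ 2 * b ≤ (x ^ 2 + (n : ℝ) + 3) ^ 2 := by
        rw [hb]; push_cast; nlinarith [sq_nonneg x, Nat.cast_nonneg (α := ℝ) n]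
      exact (Real.sqrt_le_sqrt h2).trans_eq (Real.sqrt_sq (by positivity))
    have hrp : (0 : ℝ) ≤ b ^ ((n : ℝ) / 2) := Real.rpow_nonneg hb0 _
    calc |x| * b ^ (((n : ℝ) + 1) / 2) + ((n : ℝ) + 1) * b ^ ((n : ℝ) / 2)
        = (|x| * Real.sqrt b + ((n : ℝ) + 1)) * b ^ ((n : ℝ) / 2) := by rw [e1]; ring
      _ ≤ b * b ^ ((n : ℝ) / 2) := by
          apply mul_le_mul_of_nonneg_right _ hrp
          rw [hb]; linarith
      _ = (x ^ 2 + 2 * ((n + 2 : ℕ) : ℝ)) ^ (((n + 2 : ℕ) : ℝ) / 2) := by rw [egoal]; ring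

lemma rodrigues_eq_aeval (n : ℕ) (t : ℝ) :
    (-1 : ℝ) ^ n * Real.exp (t ^ 2) * iteratedDeriv n (fun s => Real.exp (-(s ^ 2))) t
      = (Real.sqrt 2) ^ n * aeval (Real.sqrt 2 * t) (hermite n) := by
  have hcd : ContDiff ℝ n (fun y : ℝ => Real.exp (-(y ^ 2 / 2))) := by
    apply ContDiff.exp
    exact (((contDiff_id (𝕜 := ℝ)).pow 2).div_const 2).neg
  have hfun : (fun x : ℝ => Real.exp (-((Real.sqrt 2 * x) ^ 2 / 2)))
      = fun s : ℝ => Real.exp (-(s ^ 2)) := by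
    funext x
    rw [mul_pow, Real.sq_sqrt (by norm_num : (0:ℝ) ≤ 2)]
    ring_nf
  have hIter := iteratedDeriv_comp_const_mul hcd (Real.sqrt 2)
  rw [hfun] at hIter
  have h1 : iteratedDeriv n (fun s : ℝ => Real.exp (-(s ^ 2))) t
      = (Real.sqrt 2) ^ n * iteratedDeriv n (fun y : ℝ => Real.exp (-(y ^ 2 / 2)))
          (Real.sqrt 2 * t) := by rw [hIter]
  rw [h1, iteratedDeriv_eq_iterate,
    Polynomial.deriv_gaussian_eq_hermite_mul_gaussian n (Real.sqrt 2 * t)]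
  have h2 : Real.exp (-((Real.sqrt 2 * t) ^ 2 / 2)) = Real.exp (-(t ^ 2)) := by
    rw [mul_pow, Real.sq_sqrt (by norm_num : (0:ℝ) ≤ 2)]
    ring_nf
  rw [h2]
  have h3 : Real.exp (t ^ 2) * Real.exp (-(t ^ 2)) = 1 := by
    rw [← Real.exp_add]; simp
  have h4 : ((-1 : ℝ) ^ n) * ((-1 : ℝ) ^ n) = 1 := by
    rw [← pow_add]
    exact Even.neg_one_pow ⟨n, rfl⟩
  set A : ℝ := aeval (Real.sqrt 2 * t) (hermite n) with hA
  calc (-1 : ℝ) ^ n * Real.exp (t ^ 2) * ((Real.sqrt 2) ^ n * ((-1) ^ n * A * Real.exp (-(t ^ 2))))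
      = ((-1 : ℝ) ^ n * (-1 : ℝ) ^ n) * (Real.exp (t ^ 2) * Real.exp (-(t ^ 2)))
        * ((Real.sqrt 2) ^ n * A) := by ring
    _ = (Real.sqrt 2) ^ n * A := by rw [h3, h4]; ring

/-- For every `n` and `t`, `e^{-t²/2} |H_n(t)| ≤ 2^n n^{n/2}` (with `0^0 = 1`). -/
theorem hermite_gaussian_bound (n : ℕ) (t : ℝ) :
    Real.exp (-(t ^ 2) / 2) * |hermiteRodrigues n t| ≤
      2 ^ n * (n : ℝ) ^ ((n : ℝ) / 2) := by
  rcases Nat.eq_zero_or_pos n with hn | hn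
  · subst hn
    simp only [hermiteRodrigues, pow_zero, one_mul, iteratedDeriv_zero, Nat.cast_zero,
      zero_div, Real.rpow_zero, mul_one]
    rw [← Real.exp_add]
    simp only [abs_of_pos (Real.exp_pos _)]
    rw [← Real.exp_add]
    refine Real.exp_le_one_iff.mpr ?_
    nlinarith [sq_nonneg t]
  · have hn0 : (0 : ℝ) < n := by exact_mod_cast hn
    have hrep : hermiteRodrigues n t = (Real.sqrt 2) ^ n * aeval (Real.sqrt 2 * t) (hermite n) :=
      rodrigues_eq_aeval n t
    have hs2 : (0 : ℝ) ≤ (Real.sqrt 2) ^ n := by positivity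
    have habs : |hermiteRodrigues n t| ≤
        (Real.sqrt 2) ^ n * ((Real.sqrt 2 * t) ^ 2 + 2 * n) ^ ((n : ℝ) / 2) := by
      rw [hrep, abs_mul, abs_of_nonneg hs2]
      exact mul_le_mul_of_nonneg_left (abs_aeval_hermite_le n _) hs2
    have hsq : (Real.sqrt 2 * t) ^ 2 = 2 * t ^ 2 := by
      rw [mul_pow, Real.sq_sqrt (by norm_num : (0:ℝ) ≤ 2)]
    have hmul : ((Real.sqrt 2 * t) ^ 2 + 2 * (n : ℝ)) ^ ((n : ℝ) / 2)
        = (2 : ℝ) ^ ((n : ℝ) / 2) * (t ^ 2 + n) ^ ((n : ℝ) / 2) := by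
      rw [hsq, show (2 : ℝ) * t ^ 2 + 2 * (n : ℝ) = 2 * (t ^ 2 + n) by ring,
        Real.mul_rpow (by norm_num) (by positivity)]
    have hs2n : (Real.sqrt 2) ^ n = (2 : ℝ) ^ ((n : ℝ) / 2) := by
      rw [Real.sqrt_eq_rpow, ← Real.rpow_natCast ((2:ℝ) ^ ((1:ℝ)/2)) n,
        ← Real.rpow_mul (by norm_num)]
      congr 1
      ring
    have hexp : (t ^ 2 + (n : ℝ)) ^ ((n : ℝ) / 2)
        ≤ (n : ℝ) ^ ((n : ℝ) / 2) * Real.exp (t ^ 2 / 2) := by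
      have h := Real.add_one_le_exp (t ^ 2 / n)
      have h2 : (n : ℝ) * (t ^ 2 / n + 1) = t ^ 2 + n := by field_simp
      have h1 : t ^ 2 + (n : ℝ) ≤ (n : ℝ) * Real.exp (t ^ 2 / n) := by nlinarith
      calc (t ^ 2 + (n : ℝ)) ^ ((n : ℝ) / 2)
          ≤ ((n : ℝ) * Real.exp (t ^ 2 / n)) ^ ((n : ℝ) / 2) :=
            Real.rpow_le_rpow (by positivity) h1 (by positivity)
        _ = (n : ℝ) ^ ((n : ℝ) / 2) * (Real.exp (t ^ 2 / n)) ^ ((n : ℝ) / 2) :=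
            Real.mul_rpow hn0.le (Real.exp_pos _).le
        _ = (n : ℝ) ^ ((n : ℝ) / 2) * Real.exp (t ^ 2 / 2) := by
            rw [← Real.exp_mul]
            congr 1
            field_simp
    refine le_trans (mul_le_mul_of_nonneg_left habs (Real.exp_pos _).le) ?_
    rw [hmul, hs2n]
    calc Real.exp (-(t ^ 2) / 2)
          * ((2:ℝ) ^ ((n:ℝ)/2) * ((2:ℝ) ^ ((n:ℝ)/2) * (t ^ 2 + (n:ℝ)) ^ ((n:ℝ)/2)))
        ≤ Real.exp (-(t ^ 2) / 2)
          * ((2:ℝ) ^ ((n:ℝ)/2) * ((2:ℝ) ^ ((n:ℝ)/2)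
            * ((n : ℝ) ^ ((n : ℝ) / 2) * Real.exp (t ^ 2 / 2)))) := by
          have hp1 : (0:ℝ) ≤ (2:ℝ) ^ ((n:ℝ)/2) := by positivity
          have hp2 : (0:ℝ) ≤ Real.exp (-(t ^ 2) / 2) := (Real.exp_pos _).le
          gcongr
      _ = ((2:ℝ) ^ ((n:ℝ)/2) * (2:ℝ) ^ ((n:ℝ)/2)) * (n : ℝ) ^ ((n : ℝ) / 2)
            * (Real.exp (-(t ^ 2) / 2) * Real.exp (t ^ 2 / 2)) := by ring
      _ = 2 ^ n * (n : ℝ) ^ ((n : ℝ) / 2) := by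
          rw [← Real.exp_add, ← Real.rpow_add (by norm_num : (0:ℝ) < 2),
            show (n:ℝ)/2 + (n:ℝ)/2 = (n:ℝ) by ring,
            show -(t ^ 2) / 2 + t ^ 2 / 2 = 0 by ring, Real.exp_zero, Real.rpow_natCast, mul_one]
end

section
/- Let s > 0 and let θ : ℝ^d → ℂ be a smooth function such that ∂^α θ ∈ L¹(ℝ^d) for every multi-index α, and suppose there exist h > 0 and C > 0 such that ‖⟨ξ⟩^{|α|} θ̂(ξ)‖_{L^∞(ℝ^d)} ≤ C h^{-|α|} α!^s for every multi-index α. Then there exist h₁ > 0 and C₁ > 0 such that ‖∂^α θ‖_{L^∞(ℝ^d)} ≤ C₁ h₁^{-|α|} α!^s for every multi-index α. In particular θ belongs to the Gevrey class of index s on ℝ^d. -/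
open MeasureTheory Real

/-- The Fourier transform `θ̂(ξ) = ∫ θ(x) e^{-i⟨x,ξ⟩} dx`. -/
noncomputable def FT (d : ℕ) (g : EuclideanSpace ℝ (Fin d) → ℂ)
    (ξ : EuclideanSpace ℝ (Fin d)) : ℂ :=
  ∫ x : EuclideanSpace ℝ (Fin d), g x * Complex.exp (-Complex.I * ((inner ℝ x ξ : ℝ) : ℂ))

/-- The partial derivative `∂_{x_k}`. -/
noncomputable def pderiv1 (d : ℕ) (k : Fin d) (f : EuclideanSpace ℝ (Fin d) → ℂ) :
    EuclideanSpace ℝ (Fin d) → ℂ :=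
  fun x => fderiv ℝ f x (EuclideanSpace.single k 1)

/-- The multi-index partial derivative `∂^α`. -/
noncomputable def pderivMulti (d : ℕ) (α : Fin d → ℕ) (f : EuclideanSpace ℝ (Fin d) → ℂ) :
    EuclideanSpace ℝ (Fin d) → ℂ :=
  (List.finRange d).foldr (fun k g => (pderiv1 d k)^[α k] g) f

open FourierTransform

section Aux

lemma pderiv1_smooth {d : ℕ} (k : Fin d) {f : EuclideanSpace ℝ (Fin d) → ℂ}
    (hf : ContDiff ℝ (⊤ : ℕ∞) f) : ContDiff ℝ (⊤ : ℕ∞) (pderiv1 d k f) :=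
  ((hf.fderiv_right (by simp)).clm_apply contDiff_const)

lemma pderiv1_comm {d : ℕ} (j k : Fin d) {f : EuclideanSpace ℝ (Fin d) → ℂ}
    (hf : ContDiff ℝ (⊤ : ℕ∞) f) : pderiv1 d j (pderiv1 d k f) = pderiv1 d k (pderiv1 d j f) := by
  funext x
  have hdf : ContDiff ℝ (⊤ : ℕ∞) (fderiv ℝ f) := hf.fderiv_right (by simp)
  have key : ∀ (v w : EuclideanSpace ℝ (Fin d)) (x : EuclideanSpace ℝ (Fin d)),
      fderiv ℝ (fun y => fderiv ℝ f y w) x v = fderiv ℝ (fderiv ℝ f) x v w := by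
    intro v w x
    rw [fderiv_clm_apply (hdf.differentiable (by simp) x) (differentiableAt_const _)]
    simp
  have symm := (hf.contDiffAt (x := x)).isSymmSndFDerivAt (by rw [minSmoothness_of_isRCLikeNormedField]; exact WithTop.coe_le_coe.2 le_top)
  show fderiv ℝ (fun y => fderiv ℝ f y _) x _ = fderiv ℝ (fun y => fderiv ℝ f y _) x _
  rw [key, key, symm.eq]

lemma iterate_smooth {d : ℕ} (k : Fin d) (m : ℕ) {f : EuclideanSpace ℝ (Fin d) → ℂ}
    (hf : ContDiff ℝ (⊤ : ℕ∞) f) : ContDiff ℝ (⊤ : ℕ∞) ((pderiv1 d k)^[m] f) := by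
  induction m with
  | zero => exact hf
  | succ n ih => rw [Function.iterate_succ_apply']; exact pderiv1_smooth k ih

lemma foldr_smooth {d : ℕ} (α : Fin d → ℕ) (l : List (Fin d)) {f : EuclideanSpace ℝ (Fin d) → ℂ}
    (hf : ContDiff ℝ (⊤ : ℕ∞) f) :
    ContDiff ℝ (⊤ : ℕ∞) (l.foldr (fun k g => (pderiv1 d k)^[α k] g) f) := by
  induction l with
  | nil => exact hf
  | cons k t ih => exact iterate_smooth k (α k) ih

lemma pderivMulti_smooth {d : ℕ} (α : Fin d → ℕ) {f : EuclideanSpace ℝ (Fin d) → ℂ}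
    (hf : ContDiff ℝ (⊤ : ℕ∞) f) : ContDiff ℝ (⊤ : ℕ∞) (pderivMulti d α f) := foldr_smooth α _ hf

lemma pderiv1_iterate_comm {d : ℕ} (j k : Fin d) (m : ℕ) {f : EuclideanSpace ℝ (Fin d) → ℂ}
    (hf : ContDiff ℝ (⊤ : ℕ∞) f) :
    pderiv1 d j ((pderiv1 d k)^[m] f) = (pderiv1 d k)^[m] (pderiv1 d j f) := by
  induction m with
  | zero => rfl
  | succ n ih =>
    rw [Function.iterate_succ_apply', Function.iterate_succ_apply',
      pderiv1_comm j k (iterate_smooth k n hf), ih]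

lemma pderiv1_foldr_comm {d : ℕ} (j : Fin d) (α : Fin d → ℕ) (l : List (Fin d))
    {f : EuclideanSpace ℝ (Fin d) → ℂ} (hf : ContDiff ℝ (⊤ : ℕ∞) f) :
    pderiv1 d j (l.foldr (fun k g => (pderiv1 d k)^[α k] g) f)
      = l.foldr (fun k g => (pderiv1 d k)^[α k] g) (pderiv1 d j f) := by
  induction l with
  | nil => rfl
  | cons k t ih =>
    show pderiv1 d j ((pderiv1 d k)^[α k] _) = (pderiv1 d k)^[α k] _
    rw [pderiv1_iterate_comm j k (α k) (foldr_smooth α t hf), ih]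

lemma foldr_congr {d : ℕ} {α β : Fin d → ℕ} (l : List (Fin d)) (h : ∀ k ∈ l, α k = β k)
    (f : EuclideanSpace ℝ (Fin d) → ℂ) :
    l.foldr (fun k g => (pderiv1 d k)^[α k] g) f = l.foldr (fun k g => (pderiv1 d k)^[β k] g) f := by
  induction l with
  | nil => rfl
  | cons k t ih =>
    show (pderiv1 d k)^[α k] _ = (pderiv1 d k)^[β k] _
    rw [h k List.mem_cons_self, ih fun k hk => h k (List.mem_cons_of_mem _ hk)]

lemma foldr_update {d : ℕ} (j : Fin d) (α : Fin d → ℕ) (l : List (Fin d)) (hnd : l.Nodup)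
    (hj : j ∈ l) {f : EuclideanSpace ℝ (Fin d) → ℂ} (hf : ContDiff ℝ (⊤ : ℕ∞) f) :
    l.foldr (fun k g => (pderiv1 d k)^[Function.update α j (α j + 1) k] g) f
      = l.foldr (fun k g => (pderiv1 d k)^[α k] g) (pderiv1 d j f) := by
  induction l with
  | nil => simp at hj
  | cons k t ih =>
    rcases List.nodup_cons.1 hnd with ⟨hkt, hndt⟩
    show (pderiv1 d k)^[Function.update α j (α j + 1) k] _ = (pderiv1 d k)^[α k] _
    rcases eq_or_ne k j with rfl | hkj
    · rw [foldr_congr t (fun i hi => Function.update_of_ne (fun (h : i = k) => hkt (h ▸ hi)) _ _) f,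
        Function.update_self, Function.iterate_succ_apply,
        pderiv1_foldr_comm k α t hf]
    · rw [Function.update_of_ne hkj,
        ih hndt (List.mem_of_ne_of_mem (Ne.symm hkj) hj)]

lemma pderivMulti_succ {d : ℕ} (j : Fin d) (α : Fin d → ℕ) {f : EuclideanSpace ℝ (Fin d) → ℂ}
    (hf : ContDiff ℝ (⊤ : ℕ∞) f) :
    pderiv1 d j (pderivMulti d α f) = pderivMulti d (Function.update α j (α j + 1)) f := by
  rw [pderivMulti, pderivMulti, pderiv1_foldr_comm j α _ hf,
    foldr_update j α _ (List.nodup_finRange d) (List.mem_finRange j) hf]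

lemma pderivMulti_zero {d : ℕ} {α : Fin d → ℕ} (hα : ∀ i, α i = 0)
    (f : EuclideanSpace ℝ (Fin d) → ℂ) : pderivMulti d α f = f := by
  rw [pderivMulti, foldr_congr (β := fun _ => 0) _ (fun k _ => hα k) f]
  induction (List.finRange d) with
  | nil => rfl
  | cons k t ih => exact ih

lemma fourier_eq_FT {d : ℕ} (g : EuclideanSpace ℝ (Fin d) → ℂ) (w : EuclideanSpace ℝ (Fin d)) :
    𝓕 g w = FT d g ((2 * π) • w) := by
  rw [Real.fourier_eq, FT]
  congr 1
  funext v
  rw [Circle.smul_def, Real.fourierChar_apply, smul_eq_mul, mul_comm]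
  congr 1
  rw [real_inner_smul_right]
  push_cast
  ring_nf

lemma coord_le_norm {d : ℕ} (v : EuclideanSpace ℝ (Fin d)) (j : Fin d) : |v j| ≤ ‖v‖ := by
  rw [EuclideanSpace.norm_eq]
  calc |v j| = Real.sqrt (‖v j‖ ^ 2) := by
        rw [Real.sqrt_sq_eq_abs]; simp [Real.norm_eq_abs, abs_abs]
    _ ≤ _ := by
      apply Real.sqrt_le_sqrt
      exact Finset.single_le_sum (f := fun i => ‖v i‖ ^ 2) (fun i _ => sq_nonneg _)
        (Finset.mem_univ j)

lemma clm_norm_le {d : ℕ} (T : EuclideanSpace ℝ (Fin d) →L[ℝ] ℂ) :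
    ‖T‖ ≤ ∑ j, ‖T (EuclideanSpace.single j 1)‖ := by
  refine T.opNorm_le_bound (Finset.sum_nonneg fun _ _ => norm_nonneg _) fun v => ?_
  have hv : v = ∑ j, v j • EuclideanSpace.single j 1 := by
    ext i
    rw [WithLp.ofLp_sum, Finset.sum_apply]
    simp [EuclideanSpace.single_apply]
  calc ‖T v‖ = ‖∑ j, v j • T (EuclideanSpace.single j 1)‖ := by
        conv_lhs => rw [hv]
        rw [map_sum]
        simp
    _ ≤ ∑ j, ‖v j • T (EuclideanSpace.single j 1)‖ := norm_sum_le _ _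
    _ ≤ ∑ j, ‖T (EuclideanSpace.single j 1)‖ * ‖v‖ := by
        refine Finset.sum_le_sum fun j _ => ?_
        rw [norm_smul, mul_comm]
        have : ‖v j‖ ≤ ‖v‖ := by rw [Real.norm_eq_abs]; exact coord_le_norm v j
        exact mul_le_mul_of_nonneg_left this (norm_nonneg _)
    _ = (∑ j, ‖T (EuclideanSpace.single j 1)‖) * ‖v‖ := (Finset.sum_mul _ _ _).symm

lemma integrable_fderiv {d : ℕ} {g : EuclideanSpace ℝ (Fin d) → ℂ} (hg : ContDiff ℝ (⊤ : ℕ∞) g)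
    (hgi' : ∀ j, Integrable (pderiv1 d j g)) : Integrable (fderiv ℝ g) := by
  refine Integrable.mono' (g := fun x => ∑ j, ‖pderiv1 d j g x‖)
    (integrable_finset_sum _ fun j _ => (hgi' j).norm)
    ((hg.fderiv_right (m := (⊤ : ℕ∞)) (by simp)).continuous.aestronglyMeasurable) ?_
  filter_upwards with x
  exact clm_norm_le (fderiv ℝ g x)

lemma fourier_pderiv1 {d : ℕ} (k : Fin d) {g : EuclideanSpace ℝ (Fin d) → ℂ}
    (hg : ContDiff ℝ (⊤ : ℕ∞) g) (hgi : Integrable g) (hgi' : ∀ j, Integrable (pderiv1 d j g))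
    (w : EuclideanSpace ℝ (Fin d)) :
    𝓕 (pderiv1 d k g) w = (2 * π * Complex.I * (w k)) * 𝓕 g w := by
  have hfd : Integrable (fderiv ℝ g) := integrable_fderiv hg hgi'
  have h1 : 𝓕 (pderiv1 d k g) w = 𝓕 (fderiv ℝ g) w (EuclideanSpace.single k 1) :=
    (Real.fourier_continuousLinearMap_apply hfd).symm
  rw [h1, Real.fourier_fderiv hgi (hg.differentiable (by simp)) hfd]
  rw [VectorFourier.fourierSMulRight_apply]
  have : ((-innerSL ℝ) w) (EuclideanSpace.single k 1) = -(w k) := by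
    simp [EuclideanSpace.inner_single_right]
  rw [this]
  simp only [smul_eq_mul, Complex.real_smul, neg_mul]
  push_cast
  ring

lemma fourier_pderivMulti {d : ℕ} {θ : EuclideanSpace ℝ (Fin d) → ℂ}
    (hsmooth : ContDiff ℝ (⊤ : ℕ∞) θ) (hint : ∀ α, Integrable (pderivMulti d α θ)) :
    ∀ (n : ℕ) (β : Fin d → ℕ), ∑ i, β i = n → ∀ w,
      𝓕 (pderivMulti d β θ) w = (∏ k, (2 * π * Complex.I * (w k)) ^ (β k)) * 𝓕 θ w := by
  intro n
  induction n with
  | zero =>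
    intro β hβ w
    have h0 : ∀ i, β i = 0 := fun i => (Finset.sum_eq_zero_iff.1 hβ) i (Finset.mem_univ i)
    rw [pderivMulti_zero h0]
    simp [h0]
  | succ n ih =>
    intro β hβ w
    have hex : ∃ j, β j ≠ 0 := by
      by_contra hc
      push_neg at hc
      simp [hc] at hβ
    obtain ⟨j, hj⟩ := hex
    set β' := Function.update β j (β j - 1) with hβ'
    have hup : Function.update β' j (β' j + 1) = β := by
      funext i
      rcases eq_or_ne i j with rfl | hij
      · simp only [hβ', Function.update_self]
        omega
      · simp [hβ', Function.update_of_ne hij]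
    have hsum' : ∑ i, β' i = n := by
      have := Finset.sum_update_of_mem (Finset.mem_univ j) β (β j - 1)
      rw [hβ']
      rw [this]
      rw [Finset.sdiff_singleton_eq_erase] at this ⊢
      have h2 := Finset.add_sum_erase Finset.univ β (Finset.mem_univ j)
      omega
    have hpd : pderivMulti d β θ = pderiv1 d j (pderivMulti d β' θ) := by
      rw [pderivMulti_succ j β' hsmooth, hup]
    rw [hpd, fourier_pderiv1 j (pderivMulti_smooth β' hsmooth) (hint β')
      (fun j' => by rw [pderivMulti_succ j' β' hsmooth]; exact hint _) w,
      ih β' hsum' w]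
    have e1 : (∏ k, (2 * (π:ℂ) * Complex.I * (w k)) ^ (Function.update β' j (β' j + 1) k))
        = (2 * (π:ℂ) * Complex.I * (w j)) ^ (β' j + 1)
          * ∏ k ∈ Finset.univ.erase j, (2 * (π:ℂ) * Complex.I * (w k)) ^ β' k := by
      rw [← Finset.mul_prod_erase Finset.univ _ (Finset.mem_univ j), Function.update_self]
      congr 1
      refine Finset.prod_congr rfl fun i hi => ?_
      rw [Function.update_of_ne (Finset.ne_of_mem_erase hi)]
    have e2 : (∏ k, (2 * (π:ℂ) * Complex.I * (w k)) ^ β' k)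
        = (2 * (π:ℂ) * Complex.I * (w j)) ^ (β' j)
          * ∏ k ∈ Finset.univ.erase j, (2 * (π:ℂ) * Complex.I * (w k)) ^ β' k :=
      (Finset.mul_prod_erase Finset.univ _ (Finset.mem_univ j)).symm
    rw [← hup, e1, e2, pow_succ]
    ring

lemma fourier_cont {d : ℕ} {g : EuclideanSpace ℝ (Fin d) → ℂ} (hgi : Integrable g) :
    Continuous (𝓕 g) := by
  refine VectorFourier.fourierIntegral_continuous Real.continuous_fourierChar ?_ hgi
  exact continuous_inner

lemma sup_bound {d : ℕ} {g : EuclideanSpace ℝ (Fin d) → ℂ} (hc : Continuous g)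
    (hgi : Integrable g) (h2 : Integrable (𝓕 g)) (x : EuclideanSpace ℝ (Fin d)) :
    ‖g x‖ ≤ ∫ w, ‖𝓕 g w‖ := by
  conv_lhs => rw [← hgi.fourierInv_fourier_eq h2 hc.continuousAt]
  rw [Real.fourierInv_eq]
  refine (norm_integral_le_integral_norm _).trans_eq ?_
  congr 1
  funext v
  rw [Circle.norm_smul]

lemma fact_add_le (a m : ℕ) : ((a + m).factorial : ℝ) ≤ 2 ^ (a + m) * a.factorial * m.factorial := by
  have h1 : (a + m).choose m * a.factorial * m.factorial = (a + m).factorial :=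
    Nat.add_choose_mul_factorial_mul_factorial a m
  have h2 : (a + m).choose m ≤ 2 ^ (a + m) := by
    calc (a + m).choose m ≤ ∑ i ∈ Finset.range (a + m + 1), (a + m).choose i :=
          Finset.single_le_sum (f := fun i => (a + m).choose i) (fun i _ => Nat.zero_le _)
            (Finset.mem_range.2 (by omega))
      _ = 2 ^ (a + m) := Nat.sum_range_choose (a + m)
  have : (a + m).factorial ≤ 2 ^ (a + m) * a.factorial * m.factorial := by
    rw [← h1]
    exact Nat.mul_le_mul_right _ (Nat.mul_le_mul_right _ h2)
  exact_mod_cast this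

lemma chain (n m : ℕ) (t F R : ℝ) (hF : 0 ≤ F) (ht : 0 ≤ t) (u : ℝ) (hu : t ≤ u)
    (hb : (1 + u ^ 2) ^ ((((n : ℝ) + (m : ℝ))) / 2) * F ≤ R) :
    u ^ n * F ≤ 2 ^ m * (1 + t) ^ (-(m : ℝ)) * R := by
  have hu0 : 0 ≤ u := ht.trans hu
  have h1u : (0:ℝ) < 1 + u ^ 2 := by positivity
  have h1t : (0:ℝ) < 1 + t := by linarith
  have self_eq : ∀ x : ℝ, 0 ≤ x → x = (x ^ 2) ^ ((1:ℝ)/2) := by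
    intro x hx
    rw [← Real.rpow_natCast x 2, ← Real.rpow_mul hx]
    norm_num
  have e1 : u ^ n ≤ ((1 + u ^ 2) ^ ((1:ℝ)/2)) ^ n := by
    apply pow_le_pow_left₀ hu0
    calc u = (u ^ 2) ^ ((1:ℝ)/2) := self_eq u hu0
      _ ≤ (1 + u ^ 2) ^ ((1:ℝ)/2) := Real.rpow_le_rpow (by positivity) (by nlinarith) (by norm_num)
  have e2 : (1 + t) ^ m / 2 ^ m ≤ ((1 + u ^ 2) ^ ((1:ℝ)/2)) ^ m := by
    rw [div_eq_mul_inv, ← inv_pow, ← mul_pow]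
    apply pow_le_pow_left₀ (by positivity)
    calc (1 + t) * 2⁻¹ = (((1 + t) * 2⁻¹) ^ 2) ^ ((1:ℝ)/2) := self_eq _ (by positivity)
      _ ≤ (1 + u ^ 2) ^ ((1:ℝ)/2) := by
          apply Real.rpow_le_rpow (by positivity) ?_ (by norm_num)
          nlinarith [sq_nonneg (1 - t), sq_nonneg t, hu, ht]
  have key : u ^ n * F * ((1 + t) ^ m / 2 ^ m) ≤ R := by
    calc u ^ n * F * ((1 + t) ^ m / 2 ^ m)
        ≤ ((1 + u ^ 2) ^ ((1:ℝ)/2)) ^ n * F * ((1 + u ^ 2) ^ ((1:ℝ)/2)) ^ m := by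
          apply mul_le_mul (mul_le_mul e1 le_rfl hF (by positivity)) e2 (by positivity)
          positivity
      _ = (1 + u ^ 2) ^ (((n : ℝ) + (m : ℝ)) / 2) * F := by
          rw [← Real.rpow_natCast ((1 + u ^ 2) ^ ((1:ℝ)/2)) n,
            ← Real.rpow_natCast ((1 + u ^ 2) ^ ((1:ℝ)/2)) m,
            ← Real.rpow_mul h1u.le, ← Real.rpow_mul h1u.le]
          rw [show (1 + u ^ 2) ^ ((1:ℝ)/2 * (n:ℝ)) * F * (1 + u ^ 2) ^ ((1:ℝ)/2 * (m:ℝ))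
              = (1 + u ^ 2) ^ ((1:ℝ)/2 * (n:ℝ)) * (1 + u ^ 2) ^ ((1:ℝ)/2 * (m:ℝ)) * F by ring]
          rw [← Real.rpow_add h1u]
          ring_nf
      _ ≤ R := hb
  have h2m : (0:ℝ) < (1 + t) ^ m / 2 ^ m := by positivity
  rw [Real.rpow_neg h1t.le, Real.rpow_natCast]
  rw [← le_div_iff₀ h2m] at key
  calc u ^ n * F ≤ R / ((1 + t) ^ m / 2 ^ m) := key
    _ = 2 ^ m * ((1 + t) ^ m)⁻¹ * R := by field_simp

lemma two_pow_rpow (a : ℕ) (s : ℝ) : ((2:ℝ) ^ a) ^ s = ((2:ℝ) ^ s) ^ a := by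
  rw [← Real.rpow_natCast (2:ℝ) a, ← Real.rpow_natCast ((2:ℝ) ^ s) a,
    ← Real.rpow_mul (by norm_num), ← Real.rpow_mul (by norm_num), mul_comm]

end Aux

/-- If `θ` is smooth, all `∂^α θ ∈ L¹`, and `‖⟨ξ⟩^{|α|} θ̂‖_{L^∞} ≤ C h^{-|α|} α!^s` for all `α`,
then `‖∂^α θ‖_{L^∞} ≤ C₁ h₁^{-|α|} α!^s` for all `α`; i.e. `θ̃ ∈ Ẽ^s` implies `θ ∈ D^s_{L^∞}`. -/
theorem tildeE_subset_gevrey_Linfty (d : ℕ) (s : ℝ) (hs : 0 < s)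
    (θ : EuclideanSpace ℝ (Fin d) → ℂ) (hsmooth : ContDiff ℝ (⊤ : ℕ∞) θ)
    (hint : ∀ α : Fin d → ℕ, Integrable (pderivMulti d α θ))
    (hbound : ∃ h C : ℝ, 0 < h ∧ 0 < C ∧
      ∀ (α : Fin d → ℕ) (ξ : EuclideanSpace ℝ (Fin d)),
        (1 + ‖ξ‖ ^ 2) ^ ((∑ i, α i : ℝ) / 2) * ‖FT d θ ξ‖ ≤
          C * h⁻¹ ^ (∑ i, α i) * ((∏ i, (α i).factorial : ℕ) : ℝ) ^ s) :
    ∃ h₁ C₁ : ℝ, 0 < h₁ ∧ 0 < C₁ ∧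
      ∀ (α : Fin d → ℕ) (x : EuclideanSpace ℝ (Fin d)),
        ‖pderivMulti d α θ x‖ ≤
          C₁ * h₁⁻¹ ^ (∑ i, α i) * ((∏ i, (α i).factorial : ℕ) : ℝ) ^ s := by
  obtain ⟨h, C, hh, hC, hb⟩ := hbound
  have hθi : Integrable θ := by
    have := hint (fun _ => 0)
    rwa [pderivMulti_zero (fun _ => rfl)] at this
  rcases Nat.eq_zero_or_pos d with rfl | hd
  · -- dimension 0
    haveI : Subsingleton (EuclideanSpace ℝ (Fin 0)) :=
      ⟨fun a b => by ext i; exact i.elim0⟩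
    haveI : Finite (EuclideanSpace ℝ (Fin 0)) := Finite.of_subsingleton
    haveI : IsFiniteMeasure (volume : Measure (EuclideanSpace ℝ (Fin 0))) :=
      ⟨isCompact_univ.measure_lt_top⟩
    have hFTb : ∀ w : EuclideanSpace ℝ (Fin 0), ‖𝓕 θ w‖ ≤ C := by
      intro w
      have := hb (fun _ => 0) ((2 * π) • w)
      simp only [Finset.univ_eq_empty, Finset.sum_empty, Finset.prod_empty, Nat.cast_one,
        Real.one_rpow, pow_zero, mul_one] at this
      norm_num at this
      rw [fourier_eq_FT]
      exact this
    have h2 : Integrable (𝓕 θ) := by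
      refine Integrable.mono' (integrable_const C) (fourier_cont hθi).aestronglyMeasurable ?_
      filter_upwards with w using hFTb w
    refine ⟨1, C * (volume (Set.univ : Set (EuclideanSpace ℝ (Fin 0)))).toReal + 1, one_pos,
      by positivity, ?_⟩
    intro α x
    have hα0 : ∀ i, α i = 0 := fun i => i.elim0
    rw [pderivMulti_zero hα0]
    have : ‖θ x‖ ≤ ∫ w, ‖𝓕 θ w‖ :=
      sup_bound (hsmooth.continuous) hθi h2 x
    have h3 : (∫ w, ‖𝓕 θ w‖) ≤ ∫ _w : EuclideanSpace ℝ (Fin 0), C :=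
      integral_mono h2.norm (integrable_const C) (fun w => hFTb w)
    rw [integral_const, smul_eq_mul] at h3
    simp only [Finset.univ_eq_empty, Finset.sum_empty, Finset.prod_empty, Nat.cast_one,
      Real.one_rpow, pow_zero, mul_one, inv_one, one_pow]
    calc ‖θ x‖ ≤ (volume (Set.univ : Set (EuclideanSpace ℝ (Fin 0)))).toReal * C :=
          this.trans h3
      _ ≤ C * (volume (Set.univ : Set (EuclideanSpace ℝ (Fin 0)))).toReal + 1 := by
          rw [mul_comm]; linarith
  · -- dimension d ≥ 1
    set j0 : Fin d := ⟨0, hd⟩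
    set m : ℕ := d + 1 with hm
    set I : ℝ := ∫ w : EuclideanSpace ℝ (Fin d), (1 + ‖w‖) ^ (-(m : ℝ)) with hI
    have hIint : Integrable (fun w : EuclideanSpace ℝ (Fin d) => (1 + ‖w‖) ^ (-(m : ℝ))) := by
      apply integrable_one_add_norm
      rw [finrank_euclideanSpace_fin]
      exact_mod_cast Nat.lt_succ_self d
    have hI0 : 0 ≤ I := integral_nonneg fun w => by positivity
    set K : ℝ := 2 ^ m * I * (C * h⁻¹ ^ m * ((2 ^ m * (m.factorial : ℝ)) ^ s)) with hK
    have hK0 : 0 ≤ K := by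
      have : (0:ℝ) ≤ (2 ^ m * (m.factorial : ℝ)) ^ s := Real.rpow_nonneg (by positivity) s
      positivity
    refine ⟨h / (2 : ℝ) ^ s, K + 1, by positivity, by linarith, ?_⟩
    intro β x
    set n : ℕ := ∑ i, β i with hn
    set P : ℝ := ((∏ i, (β i).factorial : ℕ) : ℝ) with hP
    have hP0 : 0 ≤ P := by positivity
    -- the instantiated multi-index
    set α' : Fin d → ℕ := Function.update β j0 (β j0 + m) with hα'
    have hsum' : ∑ i, α' i = n + m := by
      rw [hα', Finset.sum_update_of_mem (Finset.mem_univ j0), Finset.sdiff_singleton_eq_erase]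
      have h2 := Finset.add_sum_erase Finset.univ β (Finset.mem_univ j0)
      omega
    have hprod' : (∏ i, (α' i).factorial) =
        (β j0 + m).factorial * ∏ i ∈ Finset.univ.erase j0, (β i).factorial := by
      rw [← Finset.mul_prod_erase Finset.univ _ (Finset.mem_univ j0), hα', Function.update_self]
      congr 1
      refine Finset.prod_congr rfl fun i hi => ?_
      rw [Function.update_of_ne (Finset.ne_of_mem_erase hi)]
    set Q : ℝ := ((β j0 + m).factorial : ℝ) * ((∏ i ∈ Finset.univ.erase j0, (β i).factorial : ℕ) : ℝ)
      with hQ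
    have hQ0 : 0 ≤ Q := by positivity
    set R : ℝ := C * h⁻¹ ^ (n + m) * Q ^ s with hR
    have hR0 : 0 ≤ R := by
      have : (0:ℝ) ≤ Q ^ s := Real.rpow_nonneg hQ0 s
      positivity
    -- bound from hypothesis, in convenient form
    have hFTb : ∀ ξ : EuclideanSpace ℝ (Fin d),
        (1 + ‖ξ‖ ^ 2) ^ (((n : ℝ) + (m : ℝ)) / 2) * ‖FT d θ ξ‖ ≤ R := by
      intro ξ
      have hcast : (∑ i, (α' i : ℝ)) = (n : ℝ) + (m : ℝ) := by
        rw [← Nat.cast_sum, hsum']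
        push_cast
        ring
      have := hb α' ξ
      rw [hcast, hsum', hprod'] at this
      rw [hR, hQ]
      convert this using 3
      push_cast
      ring
    -- pointwise bound on the Fourier transform of the derivative
    have hptw : ∀ w : EuclideanSpace ℝ (Fin d),
        ‖𝓕 (pderivMulti d β θ) w‖ ≤ 2 ^ m * (1 + ‖w‖) ^ (-(m : ℝ)) * R := by
      intro w
      have hξ : ‖(2 * π) • w‖ = 2 * π * ‖w‖ := by
        rw [norm_smul, Real.norm_eq_abs, abs_of_pos (by positivity)]
      have h1 : ‖𝓕 (pderivMulti d β θ) w‖ ≤ ‖(2 * π) • w‖ ^ n * ‖FT d θ ((2 * π) • w)‖ := by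
        rw [fourier_pderivMulti hsmooth hint n β rfl w, norm_mul, fourier_eq_FT]
        apply mul_le_mul_of_nonneg_right _ (norm_nonneg _)
        rw [norm_prod]
        calc ∏ k, ‖(2 * (π:ℂ) * Complex.I * (w k)) ^ β k‖
            = ∏ k, ‖2 * (π:ℂ) * Complex.I * (w k)‖ ^ β k := by
              refine Finset.prod_congr rfl fun k _ => norm_pow _ _
          _ ≤ ∏ k, ‖(2 * π) • w‖ ^ β k := by
              refine Finset.prod_le_prod (fun k _ => by positivity) fun k _ => ?_
              refine pow_le_pow_left₀ (norm_nonneg _) ?_ _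
              have : ‖2 * (π:ℂ) * Complex.I * (w k)‖ = 2 * π * |w k| := by
                simp [abs_of_pos Real.pi_pos]
              rw [this, hξ]
              have := coord_le_norm w k
              nlinarith [Real.pi_pos]
          _ = ‖(2 * π) • w‖ ^ n := Finset.prod_pow_eq_pow_sum _ _ _
      refine h1.trans ?_
      exact chain n m ‖w‖ ‖FT d θ ((2 * π) • w)‖ R (norm_nonneg _) (norm_nonneg _)
        ‖(2 * π) • w‖ (by rw [hξ]; nlinarith [Real.pi_gt_three, norm_nonneg w])
        (hFTb ((2 * π) • w))
    -- integrability of the Fourier transform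
    have hmaj : Integrable (fun w : EuclideanSpace ℝ (Fin d) =>
        2 ^ m * (1 + ‖w‖) ^ (-(m : ℝ)) * R) := (hIint.const_mul (2 ^ m)).mul_const R
    have h2 : Integrable (𝓕 (pderivMulti d β θ)) := by
      refine Integrable.mono' hmaj (fourier_cont (hint β)).aestronglyMeasurable ?_
      filter_upwards with w using hptw w
    -- the sup bound
    have hmain : ‖pderivMulti d β θ x‖ ≤ 2 ^ m * I * R := by
      refine (sup_bound (pderivMulti_smooth β hsmooth).continuous (hint β) h2 x).trans ?_
      have : (∫ w, ‖𝓕 (pderivMulti d β θ) w‖) ≤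
          ∫ w : EuclideanSpace ℝ (Fin d), 2 ^ m * (1 + ‖w‖) ^ (-(m : ℝ)) * R :=
        integral_mono h2.norm hmaj fun w => hptw w
      refine this.trans ?_
      rw [integral_mul_const, integral_const_mul, ← hI]
    -- final arithmetic
    refine hmain.trans ?_
    have hQle : Q ≤ 2 ^ n * (2 ^ m * (m.factorial : ℝ)) * P := by
      rw [hQ, hP]
      have e3 : ((β j0 + m).factorial : ℝ) ≤ 2 ^ n * 2 ^ m * (β j0).factorial * m.factorial := by
        refine (fact_add_le (β j0) m).trans ?_
        have hβj0 : β j0 ≤ n := Finset.single_le_sum (f := fun i => β i)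
          (fun i _ => Nat.zero_le _) (Finset.mem_univ j0)
        have : (2:ℝ) ^ (β j0 + m) ≤ 2 ^ n * 2 ^ m := by
          rw [← pow_add]
          exact pow_le_pow_right₀ one_le_two (by omega)
        have hf1 : (0:ℝ) ≤ ((β j0).factorial : ℝ) := by positivity
        have hf2 : (0:ℝ) ≤ (m.factorial : ℝ) := by positivity
        exact mul_le_mul_of_nonneg_right (mul_le_mul_of_nonneg_right this hf1) hf2
      have hPsplitN : (∏ i, (β i).factorial) =
          (β j0).factorial * ∏ i ∈ Finset.univ.erase j0, (β i).factorial :=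
        (Finset.mul_prod_erase Finset.univ _ (Finset.mem_univ j0)).symm
      rw [hPsplitN, Nat.cast_mul]
      have hE : (0:ℝ) ≤ ((∏ i ∈ Finset.univ.erase j0, (β i).factorial : ℕ) : ℝ) := by
        positivity
      calc ((β j0 + m).factorial : ℝ) * ((∏ i ∈ Finset.univ.erase j0, (β i).factorial : ℕ) : ℝ)
          ≤ (2 ^ n * 2 ^ m * ((β j0).factorial : ℝ) * (m.factorial : ℝ)) *
            ((∏ i ∈ Finset.univ.erase j0, (β i).factorial : ℕ) : ℝ) :=
            mul_le_mul_of_nonneg_right e3 hE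
        _ = 2 ^ n * (2 ^ m * (m.factorial : ℝ)) * (((β j0).factorial : ℝ) *
            ((∏ i ∈ Finset.univ.erase j0, (β i).factorial : ℕ) : ℝ)) := by ring
    have hQs : Q ^ s ≤ ((2:ℝ) ^ s) ^ n * (2 ^ m * (m.factorial : ℝ)) ^ s * P ^ s := by
      calc Q ^ s ≤ ((2:ℝ) ^ n * (2 ^ m * (m.factorial : ℝ)) * P) ^ s :=
            Real.rpow_le_rpow hQ0 hQle hs.le
        _ = ((2:ℝ) ^ n) ^ s * (2 ^ m * (m.factorial : ℝ)) ^ s * P ^ s := by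
            rw [Real.mul_rpow (by positivity) hP0,
              Real.mul_rpow (by positivity) (by positivity)]
        _ = ((2:ℝ) ^ s) ^ n * (2 ^ m * (m.factorial : ℝ)) ^ s * P ^ s := by
            rw [two_pow_rpow]
    calc 2 ^ m * I * R = (2 ^ m * I * (C * h⁻¹ ^ m)) * (h⁻¹ ^ n * Q ^ s) := by
          rw [hR, pow_add]; ring
      _ ≤ (2 ^ m * I * (C * h⁻¹ ^ m)) *
            (h⁻¹ ^ n * (((2:ℝ) ^ s) ^ n * (2 ^ m * (m.factorial : ℝ)) ^ s * P ^ s)) := by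
          apply mul_le_mul_of_nonneg_left _ (by positivity)
          exact mul_le_mul_of_nonneg_left hQs (by positivity)
      _ = K * (h / (2:ℝ) ^ s)⁻¹ ^ n * P ^ s := by
          rw [hK, show (h / (2:ℝ) ^ s)⁻¹ ^ n = ((2:ℝ) ^ s) ^ n * h⁻¹ ^ n by
            rw [div_eq_mul_inv, mul_inv, inv_inv, mul_pow, mul_comm]]
          ring
      _ ≤ (K + 1) * (h / (2:ℝ) ^ s)⁻¹ ^ n * P ^ s := by
          have h2s : (0:ℝ) < (2:ℝ) ^ s := Real.rpow_pos_of_pos two_pos s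
          have : (0:ℝ) ≤ (h / (2:ℝ) ^ s)⁻¹ ^ n := by positivity
          have hPs : (0:ℝ) ≤ P ^ s := Real.rpow_nonneg hP0 s
          nlinarith
end

section
/- Let s > 0 and let f ∈ L¹(ℝ^d) be such that its Fourier transform satisfies |f̂(ξ)| ≤ C^{n+1} n!^s ⟨ξ⟩^{-n} for some C > 0, all ξ ∈ ℝ^d and all n ∈ ℕ. Then there exists C₁ > 0, depending only on C, d and s, such that for every integer N ≥ 1, every integer n with 0 ≤ n ≤ N, and every ξ ∈ ℝ^d, |F(f · E_N)(ξ)| ≤ C₁^{n+1} n!^s ⟨ξ⟩^{-n}. -/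
open MeasureTheory Real

open Complex
open scoped RealInnerProductSpace

/-!
Writing `E_N` as the Fourier transform of the Gaussian `(N/π)^{d/2} e^{-N|η|²}` turns the
transform of `f E_N` into a convolution of `f̂` with that Gaussian. Peetre's inequality
`⟨ξ⟩² ≤ 2 ⟨ξ - η⟩² ⟨η⟩²` moves the weight `⟨ξ⟩^{-n}` out of the convolution at the price of
`2^{n/2} ⟨η⟩^n`, and for `n ≤ N` the growth `⟨η⟩^n ≤ e^{n|η|²/2}` is absorbed by half of the
Gaussian. The remaining Gaussian integral costs a factor `2^{d/2}`, so `C₁ = 2^{d+1} C` works.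
-/

lemma one_add_sq_norm_add_le {E : Type*} [SeminormedAddCommGroup E] (a b : E) :
    1 + ‖a + b‖ ^ 2 ≤ 2 * (1 + ‖a‖ ^ 2) * (1 + ‖b‖ ^ 2) := by
  have := norm_add_le a b
  nlinarith [norm_nonneg (a + b), norm_nonneg a, norm_nonneg b, sq_nonneg (‖a‖ - ‖b‖),
    sq_nonneg (‖a‖ * ‖b‖)]

lemma one_add_sq_norm_sub_rpow_neg_le {E : Type*} [SeminormedAddCommGroup E] {t : ℝ}
    (ht : 0 ≤ t) (ξ η : E) :
    (1 + ‖ξ - η‖ ^ 2) ^ (-t) ≤ 2 ^ t * (1 + ‖ξ‖ ^ 2) ^ (-t) * (1 + ‖η‖ ^ 2) ^ t := by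
  have hpeetre : (1 + ‖ξ‖ ^ 2) ^ t ≤ 2 ^ t * (1 + ‖ξ - η‖ ^ 2) ^ t * (1 + ‖η‖ ^ 2) ^ t := by
    rw [← mul_rpow (by positivity) (by positivity), ← mul_rpow (by positivity) (by positivity)]
    simpa using rpow_le_rpow (by positivity) (one_add_sq_norm_add_le (ξ - η) η) ht
  rw [rpow_neg (by positivity), rpow_neg (by positivity), inv_le_iff_one_le_mul₀' (by positivity)]
  calc (1 : ℝ) = (1 + ‖ξ‖ ^ 2) ^ t * ((1 + ‖ξ‖ ^ 2) ^ t)⁻¹ := by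
        rw [mul_inv_cancel₀ (by positivity)]
    _ ≤ 2 ^ t * (1 + ‖ξ - η‖ ^ 2) ^ t * (1 + ‖η‖ ^ 2) ^ t * ((1 + ‖ξ‖ ^ 2) ^ t)⁻¹ := by
        gcongr
    _ = _ := by ring

lemma one_add_rpow_le_exp {u t : ℝ} (hu : -1 ≤ u) (ht : 0 ≤ t) : (1 + u) ^ t ≤ rexp (t * u) := by
  rw [mul_comm, exp_mul]
  exact rpow_le_rpow (by linarith) (by linarith [add_one_le_exp u]) ht

lemma norm_cexp_neg_mul_sq_norm_mul_le {E : Type*} [SeminormedAddCommGroup E] {g : E → ℂ}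
    {A t b : ℝ} (hg : ∀ ζ, ‖g ζ‖ ≤ A * (1 + ‖ζ‖ ^ 2) ^ (-t)) (ht : 0 ≤ t) (htb : t ≤ b / 2)
    (ξ η : E) :
    ‖cexp (-b * ‖η‖ ^ 2) * g (ξ - η)‖ ≤
      2 ^ t * A * (1 + ‖ξ‖ ^ 2) ^ (-t) * rexp (-(b / 2) * ‖η‖ ^ 2) := by
  have hA : 0 ≤ A := nonneg_of_mul_nonneg_left ((norm_nonneg _).trans (hg 0)) (by positivity)
  have hweight : (1 + ‖η‖ ^ 2) ^ t ≤ rexp (b / 2 * ‖η‖ ^ 2) :=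
    (one_add_rpow_le_exp (by nlinarith [sq_nonneg ‖η‖]) ht).trans
      (exp_le_exp.mpr (by gcongr))
  have hnorm : ‖cexp (-b * ‖η‖ ^ 2)‖ = rexp (-b * ‖η‖ ^ 2) := by
    rw [norm_exp]; norm_cast
  calc ‖cexp (-b * ‖η‖ ^ 2) * g (ξ - η)‖
      ≤ rexp (-b * ‖η‖ ^ 2) * (A * (2 ^ t * (1 + ‖ξ‖ ^ 2) ^ (-t) * rexp (b / 2 * ‖η‖ ^ 2))) := by
        rw [norm_mul, hnorm]
        gcongr
        refine (hg _).trans (mul_le_mul_of_nonneg_left ?_ hA)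
        exact (one_add_sq_norm_sub_rpow_neg_le ht ξ η).trans (by gcongr)
    _ = 2 ^ t * A * (1 + ‖ξ‖ ^ 2) ^ (-t) * rexp (-(b / 2) * ‖η‖ ^ 2) := by
        rw [show -(b / 2) * ‖η‖ ^ 2 = -b * ‖η‖ ^ 2 + b / 2 * ‖η‖ ^ 2 by ring, Real.exp_add]
        ring

section InnerProductSpace

variable {V : Type*} [NormedAddCommGroup V] [InnerProductSpace ℝ V] [FiniteDimensional ℝ V]
  [MeasurableSpace V] [BorelSpace V]

lemma integrable_rexp_neg_mul_sq_norm {b : ℝ} (hb : 0 < b) :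
    Integrable (fun v : V => rexp (-b * ‖v‖ ^ 2)) :=
  .of_integral_ne_zero <| by
    rw [GaussianFourier.integral_rexp_neg_mul_sq_norm hb]; positivity

lemma norm_integral_cexp_neg_mul_sq_norm_mul_le {g : V → ℂ} {A t b : ℝ} (hb : 0 < b)
    (hg : ∀ ζ, ‖g ζ‖ ≤ A * (1 + ‖ζ‖ ^ 2) ^ (-t)) (ht : 0 ≤ t) (htb : t ≤ b / 2) (ξ : V) :
    (b / π) ^ (Module.finrank ℝ V / 2 : ℝ) * ‖∫ η, cexp (-b * ‖η‖ ^ 2) * g (ξ - η)‖ ≤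
      2 ^ (Module.finrank ℝ V / 2 : ℝ) * 2 ^ t * A * (1 + ‖ξ‖ ^ 2) ^ (-t) := by
  set k : ℝ := Module.finrank ℝ V / 2
  have hintegral : ‖∫ η, cexp (-b * ‖η‖ ^ 2) * g (ξ - η)‖ ≤
      2 ^ t * A * (1 + ‖ξ‖ ^ 2) ^ (-t) * (π / (b / 2)) ^ k := by
    refine (norm_integral_le_integral_norm _).trans ?_
    rw [← GaussianFourier.integral_rexp_neg_mul_sq_norm (by positivity), ← integral_const_mul]
    exact integral_mono_of_nonneg (.of_forall fun _ => norm_nonneg _)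
      ((integrable_rexp_neg_mul_sq_norm (by positivity)).const_mul _)
      (.of_forall (norm_cexp_neg_mul_sq_norm_mul_le hg ht htb ξ))
  have hconst : (b / π) ^ k * (π / (b / 2)) ^ k = 2 ^ k := by
    rw [← mul_rpow (by positivity) (by positivity)]
    congr 1
    field_simp
  calc (b / π) ^ k * ‖∫ η, cexp (-b * ‖η‖ ^ 2) * g (ξ - η)‖
      ≤ (b / π) ^ k * (2 ^ t * A * (1 + ‖ξ‖ ^ 2) ^ (-t) * (π / (b / 2)) ^ k) := by gcongr
    _ = 2 ^ k * 2 ^ t * A * (1 + ‖ξ‖ ^ 2) ^ (-t) := by rw [← hconst]; ring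

lemma integrable_gaussian_fourier_kernel {f : V → ℂ} (hf : Integrable f) {b : ℝ} (hb : 0 < b)
    (ξ : V) :
    Integrable (fun p : V × V => cexp (-b * ‖p.2‖ ^ 2) * (f p.1 * cexp (-I * ⟪p.1, ξ - p.2⟫)))
      (volume.prod volume) := by
  refine (hf.norm.mul_prod (integrable_rexp_neg_mul_sq_norm hb)).mono' ?_
    (.of_forall fun p => ?_)
  · exact (Continuous.aestronglyMeasurable (by fun_prop)).mul
      (hf.1.comp_fst.mul (Continuous.aestronglyMeasurable (by fun_prop)))
  · rw [norm_mul, norm_mul, norm_exp, norm_exp]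
    norm_cast
    simp [mul_comm]

end InnerProductSpace

lemma ofReal_EGaussR_eq_integral {d N : ℕ} (hN : 0 < N) (x : EuclideanSpace ℝ (Fin d)) :
    (EGaussR d N x : ℂ) = ((N / π) ^ (d / 2 : ℝ) : ℝ) *
      ∫ v : EuclideanSpace ℝ (Fin d), cexp (-N * ‖v‖ ^ 2 + I * ⟪x, v⟫) := by
  have hnormalize : (((N / π) ^ (d / 2 : ℝ) : ℝ) : ℂ) * (π / N) ^ (d / 2 : ℂ) = 1 := by
    have hcpow : (π / N : ℂ) ^ (d / 2 : ℂ) = ((π / N) ^ (d / 2 : ℝ) : ℝ) := by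
      rw [ofReal_cpow (by positivity)]; push_cast; rfl
    rw [hcpow, ← ofReal_mul, ← mul_rpow (by positivity) (by positivity),
      div_mul_div_cancel₀ pi_ne_zero, div_self (by positivity), one_rpow, ofReal_one]
  rw [GaussianFourier.integral_cexp_neg_mul_sq_norm_add (by simpa using hN),
    finrank_euclideanSpace_fin, ← mul_assoc, hnormalize, one_mul, EGaussR, ofReal_exp, I_sq]
  push_cast
  ring_nf

lemma FT_mul_EGaussR {d N : ℕ} (hN : 0 < N) {f : EuclideanSpace ℝ (Fin d) → ℂ}
    (hf : Integrable f) (ξ : EuclideanSpace ℝ (Fin d)) :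
    FT d (fun x => f x * (EGaussR d N x : ℂ)) ξ =
      ((N / π) ^ (d / 2 : ℝ) : ℝ) * ∫ η, cexp (-N * ‖η‖ ^ 2) * FT d f (ξ - η) := by
  have hkernel : ∀ x η : EuclideanSpace ℝ (Fin d),
      cexp (-N * ‖η‖ ^ 2 + I * ⟪x, η⟫) * (f x * cexp (-I * ⟪x, ξ⟫)) =
        cexp (-N * ‖η‖ ^ 2) * (f x * cexp (-I * ⟪x, ξ - η⟫)) := by
    intro x η
    rw [mul_left_comm, ← Complex.exp_add, mul_left_comm, ← Complex.exp_add, inner_sub_right,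
      ofReal_sub]
    ring_nf
  calc FT d (fun x => f x * (EGaussR d N x : ℂ)) ξ
      = ((N / π) ^ (d / 2 : ℝ) : ℝ) *
          ∫ x, ∫ η, cexp (-N * ‖η‖ ^ 2) * (f x * cexp (-I * ⟪x, ξ - η⟫)) := by
        rw [FT, ← integral_const_mul]
        congr 1 with x
        rw [ofReal_EGaussR_eq_integral hN, mul_comm (f x), mul_assoc, mul_assoc,
          ← integral_mul_const]
        simp only [hkernel]
    _ = ((N / π) ^ (d / 2 : ℝ) : ℝ) * ∫ η, cexp (-N * ‖η‖ ^ 2) * FT d f (ξ - η) := by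
        rw [integral_integral_swap (integrable_gaussian_fourier_kernel hf (by positivity) ξ)]
        simp only [integral_const_mul, FT]

lemma two_rpow_half_mul_two_rpow_half_le (d n : ℕ) :
    (2 : ℝ) ^ (d / 2 : ℝ) * 2 ^ (n / 2 : ℝ) ≤ (2 ^ (d + 1)) ^ (n + 1) := by
  rw [← rpow_add two_pos, ← pow_mul, ← rpow_natCast]
  apply rpow_le_rpow_of_exponent_le one_le_two
  push_cast
  nlinarith [(d.cast_nonneg : (0 : ℝ) ≤ d), (n.cast_nonneg : (0 : ℝ) ≤ n)]

theorem gaussian_window_preserves_decay_general (d : ℕ) (s C : ℝ) (hC : 0 < C)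
    (f : EuclideanSpace ℝ (Fin d) → ℂ) (hf : Integrable f)
    (hdecay : ∀ (n : ℕ) (ξ : EuclideanSpace ℝ (Fin d)),
      ‖FT d f ξ‖ ≤ C ^ (n + 1) * ((n.factorial : ℕ) : ℝ) ^ s * (1 + ‖ξ‖ ^ 2) ^ (-(n : ℝ) / 2)) :
    ∃ C₁ : ℝ, 0 < C₁ ∧
      ∀ N : ℕ, 1 ≤ N → ∀ n : ℕ, n ≤ N → ∀ ξ : EuclideanSpace ℝ (Fin d),
        ‖FT d (fun x => f x * (EGaussR d N x : ℂ)) ξ‖ ≤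
          C₁ ^ (n + 1) * ((n.factorial : ℕ) : ℝ) ^ s * (1 + ‖ξ‖ ^ 2) ^ (-(n : ℝ) / 2) := by
  refine ⟨2 ^ (d + 1) * C, by positivity, fun N hN n hn ξ => ?_⟩
  have hnN : (n : ℝ) / 2 ≤ (N : ℝ) / 2 := by gcongr
  have hsmooth := norm_integral_cexp_neg_mul_sq_norm_mul_le (V := EuclideanSpace ℝ (Fin d))
    (b := N) (by positivity) (fun ζ => by simpa only [neg_div] using hdecay n ζ) (by positivity)
    hnN ξ
  rw [finrank_euclideanSpace_fin, ofReal_natCast] at hsmooth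
  rw [FT_mul_EGaussR hN hf, norm_mul, norm_real, norm_of_nonneg (by positivity), neg_div]
  calc _ ≤ (2 ^ (d / 2 : ℝ) * 2 ^ (n / 2 : ℝ)) *
        (C ^ (n + 1) * (n.factorial : ℝ) ^ s * (1 + ‖ξ‖ ^ 2) ^ (-(n / 2 : ℝ))) := by
        convert hsmooth using 1; ring
    _ ≤ (2 ^ (d + 1)) ^ (n + 1) *
        (C ^ (n + 1) * (n.factorial : ℝ) ^ s * (1 + ‖ξ‖ ^ 2) ^ (-(n / 2 : ℝ))) := by
        gcongr; exact two_rpow_half_mul_two_rpow_half_le d n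
    _ = _ := by ring

/-- If `f ∈ L¹` and `|f̂(ξ)| ≤ C^{n+1} n!^s ⟨ξ⟩^{-n}` for all `n` and all `ξ`, then there is
`C₁ > 0` (depending only on `C`, `d`, `s`) such that `|F(fE_N)(ξ)| ≤ C₁^{n+1} n!^s ⟨ξ⟩^{-n}`
for all `N ≥ 1`, `n ≤ N` and `ξ`. -/
theorem gaussian_window_preserves_decay (d : ℕ) (s C : ℝ) (hs : 0 < s) (hC : 0 < C)
    (f : EuclideanSpace ℝ (Fin d) → ℂ) (hf : Integrable f)
    (hdecay : ∀ (n : ℕ) (ξ : EuclideanSpace ℝ (Fin d)),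
      ‖FT d f ξ‖ ≤ C ^ (n + 1) * ((n.factorial : ℕ) : ℝ) ^ s * (1 + ‖ξ‖ ^ 2) ^ (-(n : ℝ) / 2)) :
    ∃ C₁ : ℝ, 0 < C₁ ∧
      ∀ N : ℕ, 1 ≤ N → ∀ n : ℕ, n ≤ N → ∀ ξ : EuclideanSpace ℝ (Fin d),
        ‖FT d (fun x => f x * (EGaussR d N x : ℂ)) ξ‖ ≤
          C₁ ^ (n + 1) * ((n.factorial : ℕ) : ℝ) ^ s * (1 + ‖ξ‖ ^ 2) ^ (-(n : ℝ) / 2) :=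
  gaussian_window_preserves_decay_general d s C hC f hf hdecay
end

section
/- Let s ∈ [1/2,1), l ≥ 0, N ∈ ℕ, and let Γ, Γ₁ ⊆ ℝ^d ∖ {0} be cones (sets invariant under multiplication by positive scalars), with Γ open, and let c ∈ (0,1) satisfy: for all ξ ∈ Γ₁ and η ∈ ℝ^d, |ξ − η| ≤ c|ξ| implies η ∈ Γ. Let g : ℝ^d → ℂ be measurable with (i) |g(ξ)| ≤ C₀⟨ξ⟩^l for all ξ ∈ ℝ^d, and (ii) |g(ξ)| ≤ C^{n+1} n^{sn} ⟨ξ⟩^{-n} for all ξ ∈ Γ and all integers 0 ≤ n ≤ N. Let φ : ℝ^d → ℂ be measurable with |φ(η)| ≤ B^{n+1} n!^s ⟨η⟩^{-n} for all η ∈ ℝ^d and all n ∈ ℕ. Then the convolution φ * g is well defined (absolutely convergent) and there exists C₁ > 0, depending only on d, s, l, c, C₀, C, B but NOT on N, such that |(φ * g)(ξ)| ≤ C₁^{n+1} n^{sn} ⟨ξ⟩^{-n} for all ξ ∈ Γ₁ and all integers 0 ≤ n ≤ N. -/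
open MeasureTheory Real
set_option maxHeartbeats 1000000

/-- A cone in `ℝ^d`: invariant under multiplication by positive scalars. -/
def IsCone (d : ℕ) (Γ : Set (EuclideanSpace ℝ (Fin d))) : Prop :=
  ∀ ξ ∈ Γ, ∀ t : ℝ, 0 < t → t • ξ ∈ Γ

private lemma choose_le_two_pow_aux (n k : ℕ) : n.choose k ≤ 2 ^ n := by
  rcases le_or_gt k n with h | h
  · calc n.choose k ≤ ∑ i ∈ Finset.range (n + 1), n.choose i :=
        Finset.single_le_sum (fun i _ => Nat.zero_le _) (Finset.mem_range.2 (Nat.lt_succ_of_le h))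
      _ = 2 ^ n := Nat.sum_range_choose n
  · simp [Nat.choose_eq_zero_of_lt h]

private lemma add_factorial_le_aux (n k : ℕ) :
    ((n + k).factorial : ℝ) ≤ 2 ^ (n + k) * (n.factorial : ℝ) * (k.factorial : ℝ) := by
  have h := Nat.add_choose_mul_factorial_mul_factorial n k
  have h2 : (n + k).factorial ≤ 2 ^ (n + k) * n.factorial * k.factorial := by
    rw [← h]
    exact Nat.mul_le_mul_right _ (Nat.mul_le_mul_right _ (choose_le_two_pow_aux _ _))
  exact_mod_cast h2

/-- `((n+k)!)^s ≤ 2^(n+k) * k! * n^(s*n)` for `0 ≤ s ≤ 1`. -/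
private lemma fact_rpow_le_aux {s : ℝ} (hs0 : 0 ≤ s) (hs1 : s ≤ 1) (n k : ℕ) :
    ((n + k).factorial : ℝ) ^ s ≤ 2 ^ (n + k) * (k.factorial : ℝ) * (n : ℝ) ^ (s * n) := by
  have h1 : ((n + k).factorial : ℝ) ^ s ≤
      ((2 : ℝ) ^ (n + k) * (n.factorial : ℝ) * (k.factorial : ℝ)) ^ s :=
    Real.rpow_le_rpow (by positivity) (add_factorial_le_aux n k) hs0
  have h2 : ((2 : ℝ) ^ (n + k) * (n.factorial : ℝ) * (k.factorial : ℝ)) ^ s =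
      ((2 : ℝ) ^ (n + k)) ^ s * ((n.factorial : ℝ)) ^ s * ((k.factorial : ℝ)) ^ s := by
    rw [Real.mul_rpow (by positivity) (by positivity), Real.mul_rpow (by positivity) (by positivity)]
  have h3 : ((2 : ℝ) ^ (n + k)) ^ s ≤ (2 : ℝ) ^ (n + k) := by
    calc ((2 : ℝ) ^ (n + k)) ^ s ≤ ((2 : ℝ) ^ (n + k)) ^ (1 : ℝ) :=
          Real.rpow_le_rpow_of_exponent_le (one_le_pow₀ one_le_two) hs1
      _ = (2 : ℝ) ^ (n + k) := Real.rpow_one _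
  have h4 : ((n.factorial : ℝ)) ^ s ≤ (n : ℝ) ^ (s * n) := by
    have hf : (n.factorial : ℝ) ≤ (n : ℝ) ^ n := by exact_mod_cast Nat.factorial_le_pow n
    calc ((n.factorial : ℝ)) ^ s ≤ ((n : ℝ) ^ n) ^ s :=
          Real.rpow_le_rpow (by positivity) hf hs0
      _ = ((n : ℝ) ^ ((n : ℝ))) ^ s := by rw [Real.rpow_natCast]
      _ = (n : ℝ) ^ ((n : ℝ) * s) := (Real.rpow_mul (by positivity) _ _).symm
      _ = (n : ℝ) ^ (s * n) := by rw [mul_comm]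
  have h5 : ((k.factorial : ℝ)) ^ s ≤ (k.factorial : ℝ) := by
    calc ((k.factorial : ℝ)) ^ s ≤ ((k.factorial : ℝ)) ^ (1 : ℝ) :=
          Real.rpow_le_rpow_of_exponent_le
            (by exact_mod_cast Nat.one_le_iff_ne_zero.2 k.factorial_ne_zero) hs1
      _ = (k.factorial : ℝ) := Real.rpow_one _
  calc ((n + k).factorial : ℝ) ^ s
      ≤ ((2 : ℝ) ^ (n + k)) ^ s * ((n.factorial : ℝ)) ^ s * ((k.factorial : ℝ)) ^ s := by
        rw [← h2]; exact h1
    _ ≤ (2 : ℝ) ^ (n + k) * (n : ℝ) ^ (s * n) * (k.factorial : ℝ) :=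
        mul_le_mul (mul_le_mul h3 h4 (by positivity) (by positivity)) h5 (by positivity)
          (by positivity)
    _ = 2 ^ (n + k) * (k.factorial : ℝ) * (n : ℝ) ^ (s * n) := by ring

/-- Antitone Japanese-bracket comparison. -/
private lemma jb_anti_aux {a x y : ℝ} (ha : 0 < a) (hx : 0 < x) (h : a ^ 2 * x ≤ y) (m : ℕ) :
    y ^ (-(m : ℝ) / 2) ≤ a⁻¹ ^ m * x ^ (-(m : ℝ) / 2) := by
  have h1 : y ^ (-(m : ℝ) / 2) ≤ (a ^ 2 * x) ^ (-(m : ℝ) / 2) :=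
    Real.rpow_le_rpow_of_nonpos (by positivity) h
      (by have : (0:ℝ) ≤ (m : ℝ) := by positivity
          linarith)
  have h2 : (a ^ 2 * x) ^ (-(m : ℝ) / 2) = a⁻¹ ^ m * x ^ (-(m : ℝ) / 2) := by
    rw [Real.mul_rpow (by positivity) hx.le]
    congr 1
    rw [← Real.rpow_natCast a 2, ← Real.rpow_mul ha.le]
    have h3 : ((2 : ℕ) : ℝ) * (-(m : ℝ) / 2) = -(m : ℝ) := by push_cast; ring
    rw [h3, Real.rpow_neg ha.le, Real.rpow_natCast, inv_pow]
  exact h2 ▸ h1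

/-- Peetre-type inequality. -/
private lemma peetre_aux {V : Type*} [SeminormedAddCommGroup V] (x y : V) {l : ℝ} (hl : 0 ≤ l) :
    ((1 : ℝ) + ‖x - y‖ ^ 2) ^ (l / 2) ≤
      2 ^ (l / 2) * ((1 : ℝ) + ‖x‖ ^ 2) ^ (l / 2) * ((1 : ℝ) + ‖y‖ ^ 2) ^ (l / 2) := by
  have h1 : ‖x - y‖ ≤ ‖x‖ + ‖y‖ := norm_sub_le x y
  have h : (1 : ℝ) + ‖x - y‖ ^ 2 ≤ 2 * ((1 + ‖x‖ ^ 2) * (1 + ‖y‖ ^ 2)) := by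
    nlinarith [norm_nonneg x, norm_nonneg y, norm_nonneg (x - y), sq_nonneg (‖x‖ - ‖y‖),
      sq_nonneg (‖x‖ * ‖y‖)]
  calc ((1 : ℝ) + ‖x - y‖ ^ 2) ^ (l / 2)
      ≤ (2 * ((1 + ‖x‖ ^ 2) * (1 + ‖y‖ ^ 2))) ^ (l / 2) :=
        Real.rpow_le_rpow (by positivity) h (by positivity)
    _ = 2 ^ (l / 2) * ((1 : ℝ) + ‖x‖ ^ 2) ^ (l / 2) * ((1 : ℝ) + ‖y‖ ^ 2) ^ (l / 2) := by
        rw [Real.mul_rpow (by positivity) (by positivity),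
          Real.mul_rpow (by positivity) (by positivity), mul_assoc]

/-- Key convolution estimate: if `g` is polynomially bounded and has the wave-front decay
`|g(ξ)| ≤ C^{n+1} n^{sn} ⟨ξ⟩^{-n}` (for `n ≤ N`) on an open cone `Γ`, and `φ` has rapid decay
`|φ(η)| ≤ B^{n+1} n!^s ⟨η⟩^{-n}` for all `n`, then `φ * g` is well defined and satisfies
`|(φ*g)(ξ)| ≤ C₁^{n+1} n^{sn} ⟨ξ⟩^{-n}` on the smaller cone `Γ₁`, for `n ≤ N`, with `C₁`
independent of `N`. -/
theorem convolution_wavefront_estimate (d : ℕ) (s l c C₀ C B : ℝ)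
    (hs : s ∈ Set.Ico (1/2 : ℝ) 1) (hl : 0 ≤ l) (hc : c ∈ Set.Ioo (0 : ℝ) 1)
    (hC₀ : 0 < C₀) (hC : 0 < C) (hB : 0 < B) :
    ∃ C₁ : ℝ, 0 < C₁ ∧
      ∀ (N : ℕ) (Γ Γ₁ : Set (EuclideanSpace ℝ (Fin d)))
        (g φ : EuclideanSpace ℝ (Fin d) → ℂ),
        IsCone d Γ → (0 : EuclideanSpace ℝ (Fin d)) ∉ Γ → IsOpen Γ →
        IsCone d Γ₁ → (0 : EuclideanSpace ℝ (Fin d)) ∉ Γ₁ →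
        (∀ ξ ∈ Γ₁, ∀ η : EuclideanSpace ℝ (Fin d), ‖ξ - η‖ ≤ c * ‖ξ‖ → η ∈ Γ) →
        Measurable g →
        (∀ ξ : EuclideanSpace ℝ (Fin d), ‖g ξ‖ ≤ C₀ * (1 + ‖ξ‖ ^ 2) ^ (l / 2)) →
        (∀ n : ℕ, n ≤ N → ∀ ξ ∈ Γ,
          ‖g ξ‖ ≤ C ^ (n + 1) * (n : ℝ) ^ (s * n) * (1 + ‖ξ‖ ^ 2) ^ (-(n : ℝ) / 2)) →
        Measurable φ →
        (∀ (n : ℕ) (η : EuclideanSpace ℝ (Fin d)),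
          ‖φ η‖ ≤ B ^ (n + 1) * ((n.factorial : ℕ) : ℝ) ^ s * (1 + ‖η‖ ^ 2) ^ (-(n : ℝ) / 2)) →
        (∀ ξ : EuclideanSpace ℝ (Fin d), Integrable (fun η => φ η * g (ξ - η))) ∧
          ∀ n : ℕ, n ≤ N → ∀ ξ ∈ Γ₁,
            ‖∫ η : EuclideanSpace ℝ (Fin d), φ η * g (ξ - η)‖ ≤
              C₁ ^ (n + 1) * (n : ℝ) ^ (s * n) * (1 + ‖ξ‖ ^ 2) ^ (-(n : ℝ) / 2) := by
  obtain ⟨hs0, hs1⟩ := hs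
  obtain ⟨hc0, hc1⟩ := hc
  have hs0' : (0:ℝ) ≤ s := le_trans (by norm_num) hs0
  have h1c : (0:ℝ) < 1 - c := by linarith
  have hcinv : (0:ℝ) ≤ c⁻¹ := inv_nonneg.2 hc0.le
  have h1cinv : (0:ℝ) ≤ (1 - c)⁻¹ := inv_nonneg.2 h1c.le
  set kl : ℕ := ⌈l⌉₊ with hkl
  set k : ℕ := 2 * kl + d + 1 with hk
  have hlkl : l ≤ (kl : ℝ) := Nat.le_ceil l
  -- Integrability of the Japanese bracket
  have hjbint : Integrable (fun η : EuclideanSpace ℝ (Fin d) =>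
      ((1:ℝ) + ‖η‖ ^ 2) ^ (-((d:ℝ) + 1) / 2)) := by
    have hd : ((Module.finrank ℝ (EuclideanSpace ℝ (Fin d))) : ℝ) < (d:ℝ) + 1 := by
      rw [finrank_euclideanSpace_fin]; linarith
    exact integrable_rpow_neg_one_add_norm_sq hd
  set Kd : ℝ := ∫ η : EuclideanSpace ℝ (Fin d), ((1:ℝ) + ‖η‖ ^ 2) ^ (-((d:ℝ) + 1) / 2) with hKddef
  have hKd0 : 0 ≤ Kd := integral_nonneg fun η => by positivity
  set D : ℝ := C * B ^ (d + 2) * (((d+1).factorial : ℝ)) ^ s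
      + C₀ * 2 ^ (l / 2) * B ^ (k + 1) * 2 ^ k * (k.factorial : ℝ) * c⁻¹ ^ kl with hD
  have hD1 : 0 ≤ C * B ^ (d + 2) * (((d+1).factorial : ℝ)) ^ s := by positivity
  have hD2 : 0 ≤ C₀ * 2 ^ (l / 2) * B ^ (k + 1) * 2 ^ k * (k.factorial : ℝ) * c⁻¹ ^ kl := by
    have : (0:ℝ) ≤ c⁻¹ ^ kl := pow_nonneg hcinv _
    positivity
  have hD0 : 0 ≤ D := by rw [hD]; linarith
  set E' : ℝ := max (C * (1 - c)⁻¹) (2 * B * c⁻¹) with hE'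
  have hE'0 : 0 ≤ E' := le_trans (mul_nonneg hC.le h1cinv) (le_max_left _ _)
  set C₁ : ℝ := max 1 (max (D * Kd) E') with hC₁def
  have hC₁1 : (1:ℝ) ≤ C₁ := le_max_left _ _
  have hDK : D * Kd ≤ C₁ := le_trans (le_max_left _ _) (le_max_right _ _)
  have hE'C₁ : E' ≤ C₁ := le_trans (le_max_right _ _) (le_max_right _ _)
  refine ⟨C₁, by linarith, ?_⟩
  intro N Γ Γ₁ g φ hΓcone hΓ0 hΓopen hΓ₁cone hΓ₁0 hΓΓ₁ hgm hgpoly hgdec hφm hφdec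
  have hmeas : ∀ ξ : EuclideanSpace ℝ (Fin d),
      AEStronglyMeasurable (fun η => φ η * g (ξ - η)) volume := fun ξ =>
    (hφm.mul (hgm.comp (measurable_const.sub measurable_id))).aestronglyMeasurable
  -- global pointwise bound, giving integrability
  have hglobal : ∀ ξ η : EuclideanSpace ℝ (Fin d), ‖φ η * g (ξ - η)‖ ≤
      (B ^ (k+1) * ((k.factorial : ℝ)) ^ s * (C₀ * 2 ^ (l/2) * ((1:ℝ) + ‖ξ‖^2) ^ (l/2))) *
        ((1:ℝ) + ‖η‖ ^ 2) ^ (-((d:ℝ) + 1) / 2) := by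
    intro ξ η
    have hY0 : (0:ℝ) < 1 + ‖η‖^2 := by positivity
    have hY1 : (1:ℝ) ≤ 1 + ‖η‖^2 := by nlinarith [sq_nonneg ‖η‖]
    have h1 : ‖φ η‖ ≤ B ^ (k+1) * ((k.factorial : ℝ)) ^ s * ((1:ℝ) + ‖η‖^2) ^ (-(k:ℝ)/2) :=
      hφdec k η
    have h2 : ‖g (ξ - η)‖ ≤
        C₀ * (2 ^ (l/2) * ((1:ℝ) + ‖ξ‖^2) ^ (l/2) * ((1:ℝ) + ‖η‖^2) ^ (l/2)) :=
      (hgpoly (ξ - η)).trans (mul_le_mul_of_nonneg_left (peetre_aux ξ η hl) hC₀.le)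
    have h3 : ((1:ℝ) + ‖η‖^2) ^ (-(k:ℝ)/2) * ((1:ℝ) + ‖η‖^2) ^ (l/2) ≤
        ((1:ℝ) + ‖η‖ ^ 2) ^ (-((d:ℝ) + 1) / 2) := by
      rw [← Real.rpow_add hY0]
      apply Real.rpow_le_rpow_of_exponent_le hY1
      have hkcast : (k:ℝ) = 2 * (kl:ℝ) + (d:ℝ) + 1 := by rw [hk]; push_cast; ring
      rw [hkcast]
      have hkl0 : (0:ℝ) ≤ (kl:ℝ) := Nat.cast_nonneg kl
      linarith
    calc ‖φ η * g (ξ - η)‖ = ‖φ η‖ * ‖g (ξ - η)‖ := norm_mul _ _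
      _ ≤ (B ^ (k+1) * ((k.factorial : ℝ)) ^ s * ((1:ℝ) + ‖η‖^2) ^ (-(k:ℝ)/2)) *
          (C₀ * (2 ^ (l/2) * ((1:ℝ) + ‖ξ‖^2) ^ (l/2) * ((1:ℝ) + ‖η‖^2) ^ (l/2))) :=
          mul_le_mul h1 h2 (norm_nonneg _) (by positivity)
      _ = (B ^ (k+1) * ((k.factorial : ℝ)) ^ s * (C₀ * 2 ^ (l/2) * ((1:ℝ) + ‖ξ‖^2) ^ (l/2))) *
          (((1:ℝ) + ‖η‖^2) ^ (-(k:ℝ)/2) * ((1:ℝ) + ‖η‖^2) ^ (l/2)) := by ring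
      _ ≤ _ := mul_le_mul_of_nonneg_left h3 (by positivity)
  have hint : ∀ ξ : EuclideanSpace ℝ (Fin d), Integrable (fun η => φ η * g (ξ - η)) := fun ξ =>
    (hjbint.const_mul _).mono' (hmeas ξ) (ae_of_all _ (hglobal ξ))
  refine ⟨hint, ?_⟩
  intro n hn ξ hξ
  have hX0 : (0:ℝ) < 1 + ‖ξ‖^2 := by positivity
  have hX1 : (1:ℝ) ≤ 1 + ‖ξ‖^2 := by nlinarith [sq_nonneg ‖ξ‖]
  have hnsn : (0:ℝ) ≤ (n:ℝ) ^ (s*n) := Real.rpow_nonneg (Nat.cast_nonneg n) _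
  have hXe : (0:ℝ) ≤ ((1:ℝ) + ‖ξ‖^2) ^ (-(n:ℝ)/2) := Real.rpow_nonneg hX0.le _
  -- key pointwise estimate
  have key : ∀ η : EuclideanSpace ℝ (Fin d), ‖φ η * g (ξ - η)‖ ≤
      (D * E' ^ n * (n:ℝ) ^ (s*n) * ((1:ℝ) + ‖ξ‖^2) ^ (-(n:ℝ)/2)) *
        ((1:ℝ) + ‖η‖ ^ 2) ^ (-((d:ℝ) + 1) / 2) := by
    intro η
    have hY0 : (0:ℝ) < 1 + ‖η‖^2 := by positivity
    have hY1 : (1:ℝ) ≤ 1 + ‖η‖^2 := by nlinarith [sq_nonneg ‖η‖]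
    have hYd : (0:ℝ) ≤ ((1:ℝ) + ‖η‖ ^ 2) ^ (-((d:ℝ) + 1) / 2) := Real.rpow_nonneg hY0.le _
    rw [norm_mul]
    by_cases hcase : ‖η‖ ≤ c * ‖ξ‖
    · -- region A : ξ - η ∈ Γ
      have hζΓ : ξ - η ∈ Γ := hΓΓ₁ ξ hξ (ξ - η) (by rwa [sub_sub_cancel])
      have hφb : ‖φ η‖ ≤ B ^ (d+2) * (((d+1).factorial : ℝ)) ^ s *
          ((1:ℝ) + ‖η‖ ^ 2) ^ (-((d:ℝ) + 1) / 2) := by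
        have h := hφdec (d+1) η
        have he : -(((d+1 : ℕ)) : ℝ)/2 = -((d:ℝ)+1)/2 := by push_cast; ring
        rw [he] at h
        exact_mod_cast h
      have hsq : (1 - c)^2 * (1 + ‖ξ‖^2) ≤ 1 + ‖ξ - η‖^2 := by
        have h1 : (1 - c) * ‖ξ‖ ≤ ‖ξ - η‖ := by
          have h2 := norm_sub_norm_le ξ η
          nlinarith [norm_nonneg ξ]
        nlinarith [norm_nonneg (ξ - η), norm_nonneg ξ,
          mul_nonneg h1c.le (norm_nonneg ξ), hc0, hc1]
      have hζ : ((1:ℝ) + ‖ξ - η‖^2) ^ (-(n:ℝ)/2) ≤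
          (1-c)⁻¹ ^ n * ((1:ℝ) + ‖ξ‖^2) ^ (-(n:ℝ)/2) := jb_anti_aux h1c hX0 hsq n
      have hgb : ‖g (ξ - η)‖ ≤ C ^ (n+1) * (n:ℝ)^(s*n) *
          ((1-c)⁻¹ ^ n * ((1:ℝ) + ‖ξ‖^2) ^ (-(n:ℝ)/2)) :=
        (hgdec n hn (ξ - η) hζΓ).trans (mul_le_mul_of_nonneg_left hζ (by positivity))
      have e1 : C * B^(d+2) * (((d+1).factorial : ℝ))^s ≤ D := by
        rw [hD]; linarith
      have e2 : (C * (1-c)⁻¹)^n ≤ E'^n :=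
        pow_le_pow_left₀ (mul_nonneg hC.le h1cinv) (le_max_left _ _) n
      calc ‖φ η‖ * ‖g (ξ - η)‖
          ≤ (B ^ (d+2) * (((d+1).factorial : ℝ)) ^ s * ((1:ℝ) + ‖η‖ ^ 2) ^ (-((d:ℝ) + 1) / 2)) *
            (C ^ (n+1) * (n:ℝ)^(s*n) * ((1-c)⁻¹ ^ n * ((1:ℝ) + ‖ξ‖^2) ^ (-(n:ℝ)/2))) :=
            mul_le_mul hφb hgb (norm_nonneg _)
              (by positivity)
        _ = (C * B^(d+2) * (((d+1).factorial : ℝ))^s) * (C * (1-c)⁻¹)^n * (n:ℝ)^(s*n) *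
            ((1:ℝ) + ‖ξ‖^2) ^ (-(n:ℝ)/2) * ((1:ℝ) + ‖η‖ ^ 2) ^ (-((d:ℝ) + 1) / 2) := by
            ring
        _ ≤ D * E'^n * (n:ℝ)^(s*n) *
            ((1:ℝ) + ‖ξ‖^2) ^ (-(n:ℝ)/2) * ((1:ℝ) + ‖η‖ ^ 2) ^ (-((d:ℝ) + 1) / 2) := by
            have base1 : (C * B^(d+2) * (((d+1).factorial : ℝ))^s) * (C * (1-c)⁻¹)^n ≤
                D * E'^n :=
              mul_le_mul e1 e2 (pow_nonneg (mul_nonneg hC.le h1cinv) n) hD0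
            have := mul_le_mul_of_nonneg_right (mul_le_mul_of_nonneg_right
              (mul_le_mul_of_nonneg_right base1 hnsn) hXe) hYd
            calc (C * B^(d+2) * (((d+1).factorial : ℝ))^s) * (C * (1-c)⁻¹)^n * (n:ℝ)^(s*n) *
                ((1:ℝ) + ‖ξ‖^2) ^ (-(n:ℝ)/2) * ((1:ℝ) + ‖η‖ ^ 2) ^ (-((d:ℝ) + 1) / 2) ≤
                D * E'^n * (n:ℝ)^(s*n) *
                ((1:ℝ) + ‖ξ‖^2) ^ (-(n:ℝ)/2) * ((1:ℝ) + ‖η‖ ^ 2) ^ (-((d:ℝ) + 1) / 2) := this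
        _ = _ := by ring
    · -- region B : ‖η‖ > c ‖ξ‖
      push_neg at hcase
      have hsqB : c^2 * (1 + ‖ξ‖^2) ≤ 1 + ‖η‖^2 := by
        have h2 : (c*‖ξ‖)^2 ≤ ‖η‖^2 :=
          pow_le_pow_left₀ (mul_nonneg hc0.le (norm_nonneg ξ)) hcase.le 2
        nlinarith [hc0, hc1]
      -- φ bound with factorial estimate
      have hφb : ‖φ η‖ ≤ B ^ (n+k+1) * (2^(n+k) * (k.factorial : ℝ) * (n:ℝ)^(s*n)) *
          ((1:ℝ) + ‖η‖^2) ^ (-((n+k : ℕ):ℝ)/2) := by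
        refine (hφdec (n+k) η).trans ?_
        have hf := fact_rpow_le_aux hs0' hs1.le n k
        have hYe : (0:ℝ) ≤ ((1:ℝ) + ‖η‖^2) ^ (-((n+k : ℕ):ℝ)/2) := Real.rpow_nonneg hY0.le _
        exact mul_le_mul_of_nonneg_right
          (mul_le_mul_of_nonneg_left (by exact_mod_cast hf) (by positivity)) hYe
      have hgb : ‖g (ξ - η)‖ ≤
          C₀ * (2 ^ (l/2) * ((1:ℝ) + ‖ξ‖^2) ^ (l/2) * ((1:ℝ) + ‖η‖^2) ^ (l/2)) :=
        (hgpoly (ξ - η)).trans (mul_le_mul_of_nonneg_left (peetre_aux ξ η hl) hC₀.le)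
      -- exponent manipulation on the η bracket
      have hY : ((1:ℝ) + ‖η‖^2) ^ (-((n+k : ℕ):ℝ)/2) * ((1:ℝ) + ‖η‖^2) ^ (l/2) ≤
          ((1:ℝ) + ‖η‖^2) ^ (-((n+kl : ℕ):ℝ)/2) * ((1:ℝ) + ‖η‖^2) ^ (-((d:ℝ)+1)/2) := by
        rw [← Real.rpow_add hY0, ← Real.rpow_add hY0]
        apply Real.rpow_le_rpow_of_exponent_le hY1
        have hkcast : ((n+k : ℕ):ℝ) = (n:ℝ) + 2 * (kl:ℝ) + (d:ℝ) + 1 := by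
          rw [hk]; push_cast; ring
        have hklcast : ((n+kl : ℕ):ℝ) = (n:ℝ) + (kl:ℝ) := by push_cast; ring
        rw [hkcast, hklcast]
        linarith
      have hY2 : ((1:ℝ) + ‖η‖^2) ^ (-((n+kl : ℕ):ℝ)/2) ≤
          c⁻¹ ^ (n+kl) * ((1:ℝ) + ‖ξ‖^2) ^ (-((n+kl : ℕ):ℝ)/2) :=
        jb_anti_aux hc0 hX0 hsqB (n+kl)
      have hX2 : ((1:ℝ) + ‖ξ‖^2) ^ (-((n+kl : ℕ):ℝ)/2) =
          ((1:ℝ) + ‖ξ‖^2) ^ (-(n:ℝ)/2) * ((1:ℝ) + ‖ξ‖^2) ^ (-(kl:ℝ)/2) := by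
        rw [← Real.rpow_add hX0]
        congr 1
        push_cast; ring
      have hX3 : ((1:ℝ) + ‖ξ‖^2) ^ (-(kl:ℝ)/2) ≤ ((1:ℝ) + ‖ξ‖^2) ^ (-l/2) :=
        Real.rpow_le_rpow_of_exponent_le hX1 (by linarith)
      have hX4 : ((1:ℝ) + ‖ξ‖^2) ^ (l/2) * ((1:ℝ) + ‖ξ‖^2) ^ (-l/2) = 1 := by
        rw [← Real.rpow_add hX0, show l/2 + -l/2 = 0 by ring, Real.rpow_zero]
      -- now assemble
      have hcn : (0:ℝ) ≤ c⁻¹ ^ (n+kl) := pow_nonneg hcinv _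
      have hXl : (0:ℝ) ≤ ((1:ℝ) + ‖ξ‖^2) ^ (l/2) := Real.rpow_nonneg hX0.le _
      have hbk : (0:ℝ) ≤ B ^ (n+k+1) * (2^(n+k) * (k.factorial : ℝ) * (n:ℝ)^(s*n)) := by
        positivity
      calc ‖φ η‖ * ‖g (ξ - η)‖
          ≤ (B ^ (n+k+1) * (2^(n+k) * (k.factorial : ℝ) * (n:ℝ)^(s*n)) *
              ((1:ℝ) + ‖η‖^2) ^ (-((n+k : ℕ):ℝ)/2)) *
            (C₀ * (2 ^ (l/2) * ((1:ℝ) + ‖ξ‖^2) ^ (l/2) * ((1:ℝ) + ‖η‖^2) ^ (l/2))) :=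
            mul_le_mul hφb hgb (norm_nonneg _) (by positivity)
        _ = (B ^ (n+k+1) * (2^(n+k) * (k.factorial : ℝ) * (n:ℝ)^(s*n)) * C₀ * 2 ^ (l/2) *
              ((1:ℝ) + ‖ξ‖^2) ^ (l/2)) *
            (((1:ℝ) + ‖η‖^2) ^ (-((n+k : ℕ):ℝ)/2) * ((1:ℝ) + ‖η‖^2) ^ (l/2)) := by ring
        _ ≤ (B ^ (n+k+1) * (2^(n+k) * (k.factorial : ℝ) * (n:ℝ)^(s*n)) * C₀ * 2 ^ (l/2) *
              ((1:ℝ) + ‖ξ‖^2) ^ (l/2)) *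
            (((1:ℝ) + ‖η‖^2) ^ (-((n+kl : ℕ):ℝ)/2) * ((1:ℝ) + ‖η‖^2) ^ (-((d:ℝ)+1)/2)) :=
            mul_le_mul_of_nonneg_left hY (by positivity)
        _ ≤ (B ^ (n+k+1) * (2^(n+k) * (k.factorial : ℝ) * (n:ℝ)^(s*n)) * C₀ * 2 ^ (l/2) *
              ((1:ℝ) + ‖ξ‖^2) ^ (l/2)) *
            ((c⁻¹ ^ (n+kl) * ((1:ℝ) + ‖ξ‖^2) ^ (-((n+kl : ℕ):ℝ)/2)) *
              ((1:ℝ) + ‖η‖^2) ^ (-((d:ℝ)+1)/2)) := by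
            refine mul_le_mul_of_nonneg_left (mul_le_mul_of_nonneg_right hY2 hYd) ?_
            positivity
        _ = (B ^ (n+k+1) * (2^(n+k) * (k.factorial : ℝ) * (n:ℝ)^(s*n)) * C₀ * 2 ^ (l/2) *
              c⁻¹ ^ (n+kl) * ((1:ℝ) + ‖ξ‖^2) ^ (-(n:ℝ)/2) *
              (((1:ℝ) + ‖ξ‖^2) ^ (l/2) * ((1:ℝ) + ‖ξ‖^2) ^ (-(kl:ℝ)/2))) *
            ((1:ℝ) + ‖η‖^2) ^ (-((d:ℝ)+1)/2) := by
            rw [hX2]; ring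
        _ ≤ (B ^ (n+k+1) * (2^(n+k) * (k.factorial : ℝ) * (n:ℝ)^(s*n)) * C₀ * 2 ^ (l/2) *
              c⁻¹ ^ (n+kl) * ((1:ℝ) + ‖ξ‖^2) ^ (-(n:ℝ)/2) *
              (((1:ℝ) + ‖ξ‖^2) ^ (l/2) * ((1:ℝ) + ‖ξ‖^2) ^ (-l/2))) *
            ((1:ℝ) + ‖η‖^2) ^ (-((d:ℝ)+1)/2) := by
            refine mul_le_mul_of_nonneg_right ?_ hYd
            refine mul_le_mul_of_nonneg_left (mul_le_mul_of_nonneg_left hX3 hXl) ?_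
            have : (0:ℝ) ≤ B ^ (n+k+1) * (2^(n+k) * (k.factorial : ℝ) * (n:ℝ)^(s*n)) * C₀ *
                2 ^ (l/2) * c⁻¹ ^ (n+kl) * ((1:ℝ) + ‖ξ‖^2) ^ (-(n:ℝ)/2) := by
              have h2l : (0:ℝ) ≤ (2:ℝ) ^ (l/2) := Real.rpow_nonneg (by norm_num) _
              exact mul_nonneg (mul_nonneg (mul_nonneg (mul_nonneg hbk hC₀.le) h2l) hcn) hXe
            exact this
        _ = ((C₀ * 2 ^ (l/2) * B ^ (k+1) * 2^k * (k.factorial : ℝ) * c⁻¹ ^ kl) *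
              (2 * B * c⁻¹)^n * (n:ℝ)^(s*n) * ((1:ℝ) + ‖ξ‖^2) ^ (-(n:ℝ)/2)) *
            ((1:ℝ) + ‖η‖^2) ^ (-((d:ℝ)+1)/2) := by
            rw [hX4]; ring
        _ ≤ (D * E'^n * (n:ℝ)^(s*n) * ((1:ℝ) + ‖ξ‖^2) ^ (-(n:ℝ)/2)) *
            ((1:ℝ) + ‖η‖^2) ^ (-((d:ℝ)+1)/2) := by
            have e1 : C₀ * 2 ^ (l/2) * B ^ (k+1) * 2^k * (k.factorial : ℝ) * c⁻¹ ^ kl ≤ D := by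
              rw [hD]; linarith
            have e2 : (2 * B * c⁻¹)^n ≤ E'^n :=
              pow_le_pow_left₀ (mul_nonneg (by positivity) hcinv) (le_max_right _ _) n
            have base1 : (C₀ * 2 ^ (l/2) * B ^ (k+1) * 2^k * (k.factorial : ℝ) * c⁻¹ ^ kl) *
                (2 * B * c⁻¹)^n ≤ D * E'^n :=
              mul_le_mul e1 e2 (pow_nonneg (mul_nonneg (by positivity) hcinv) n) hD0
            exact mul_le_mul_of_nonneg_right (mul_le_mul_of_nonneg_right
              (mul_le_mul_of_nonneg_right base1 hnsn) hXe) hYd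
  -- conclude
  have hmaj : Integrable (fun η : EuclideanSpace ℝ (Fin d) =>
      (D * E' ^ n * (n:ℝ) ^ (s*n) * ((1:ℝ) + ‖ξ‖^2) ^ (-(n:ℝ)/2)) *
        ((1:ℝ) + ‖η‖ ^ 2) ^ (-((d:ℝ) + 1) / 2)) := hjbint.const_mul _
  calc ‖∫ η : EuclideanSpace ℝ (Fin d), φ η * g (ξ - η)‖
      ≤ ∫ η : EuclideanSpace ℝ (Fin d), ‖φ η * g (ξ - η)‖ := norm_integral_le_integral_norm _
    _ ≤ ∫ η : EuclideanSpace ℝ (Fin d),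
        (D * E' ^ n * (n:ℝ) ^ (s*n) * ((1:ℝ) + ‖ξ‖^2) ^ (-(n:ℝ)/2)) *
          ((1:ℝ) + ‖η‖ ^ 2) ^ (-((d:ℝ) + 1) / 2) :=
        integral_mono (hint ξ).norm hmaj key
    _ = (D * E' ^ n * (n:ℝ) ^ (s*n) * ((1:ℝ) + ‖ξ‖^2) ^ (-(n:ℝ)/2)) * Kd :=
        integral_const_mul _ _
    _ ≤ C₁ ^ (n + 1) * (n : ℝ) ^ (s * n) * (1 + ‖ξ‖ ^ 2) ^ (-(n : ℝ) / 2) := by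
        have h1 : D * Kd * E'^n ≤ C₁ * C₁^n :=
          mul_le_mul hDK (pow_le_pow_left₀ hE'0 hE'C₁ n) (pow_nonneg hE'0 n) (by linarith)
        calc (D * E' ^ n * (n:ℝ) ^ (s*n) * ((1:ℝ) + ‖ξ‖^2) ^ (-(n:ℝ)/2)) * Kd
            = (D * Kd * E'^n) * ((n:ℝ) ^ (s*n) * ((1:ℝ) + ‖ξ‖^2) ^ (-(n:ℝ)/2)) := by ring
          _ ≤ (C₁ * C₁^n) * ((n:ℝ) ^ (s*n) * ((1:ℝ) + ‖ξ‖^2) ^ (-(n:ℝ)/2)) :=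
              mul_le_mul_of_nonneg_right h1 (mul_nonneg hnsn hXe)
          _ = C₁ ^ (n + 1) * (n : ℝ) ^ (s * n) * (1 + ‖ξ‖ ^ 2) ^ (-(n : ℝ) / 2) := by ring
end

section
/- Let s > 0, N ∈ ℕ, and let g : ℝ^d → ℂ be measurable with |g(ξ)| ≤ C^{n+1} n!^s ⟨ξ⟩^{-n} for some C > 0, all ξ ∈ ℝ^d and all integers 0 ≤ n ≤ N. Then there exists C₁ > 0, depending only on C, d and s but not on N, such that for every multi-index α with |α| + d + 1 ≤ N and every x ∈ ℝ^d, | ∫_{ℝ^d} ξ^α g(ξ) e^{i⟨x,ξ⟩} dξ | ≤ C₁^{|α|+1} α!^s. -/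
/-!
Since `|ξ^α| ≤ ‖ξ‖^|α| ≤ ⟨ξ⟩^|α|`, the hypothesis at `n = |α| + d + 1` dominates the integrand
by `C^(n+1) n!^s ⟨ξ⟩^(-d-1)`, which is integrable on `ℝ^d`.
The Gevrey bound comes from `(|α| + m)! ≤ 2^(|α|+m) |α|! m!` together with `|α|! ≤ d^|α| α!`,
the multinomial coefficient of `α` being one term of the expansion of `(1 + ⋯ + 1)^|α| = d^|α|`.
-/

open MeasureTheory Real Finset Nat

namespace Nat

theorem factorial_add_le_two_pow_mul (a b : ℕ) : (a + b)! ≤ 2 ^ (a + b) * (a ! * b !) := by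
  rw [← add_choose_mul_factorial_mul_factorial, mul_assoc]
  exact Nat.mul_le_mul_right _ (choose_le_two_pow _ _)

theorem multinomial_le_card_pow {ι : Type*} [DecidableEq ι] (s : Finset ι) (f : ι → ℕ) :
    multinomial s f ≤ #s ^ ∑ i ∈ s, f i := by
  set f' : ι → ℕ := fun i ↦ if i ∈ s then f i else 0
  have hsum : ∑ i ∈ s, f' i = ∑ i ∈ s, f i := sum_congr rfl fun i hi ↦ if_pos hi
  have hmem : f' ∈ piAntidiag s (∑ i ∈ s, f i) :=
    mem_piAntidiag.2 ⟨hsum, fun i hi ↦ by by_contra h; exact hi (if_neg h)⟩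
  have hpow := sum_pow_eq_sum_piAntidiag s (fun _ ↦ (1 : ℕ)) (∑ i ∈ s, f i)
  simp only [sum_const, smul_eq_mul, mul_one, one_pow, prod_const_one, cast_id] at hpow
  rw [multinomial_congr fun i hi ↦ (if_pos hi : f' i = f i).symm, hpow]
  exact single_le_sum (f := multinomial s) (fun _ _ ↦ Nat.zero_le _) hmem

theorem factorial_sum_le_card_pow_mul_prod {ι : Type*} [DecidableEq ι] (s : Finset ι)
    (f : ι → ℕ) : (∑ i ∈ s, f i)! ≤ #s ^ (∑ i ∈ s, f i) * ∏ i ∈ s, (f i)! := by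
  rw [← multinomial_spec, mul_comm]
  exact Nat.mul_le_mul_right _ (multinomial_le_card_pow s f)

theorem factorial_sum_add_le {ι : Type*} [Fintype ι] (α : ι → ℕ) (m : ℕ) :
    (∑ i, α i + m)! ≤ 2 ^ m * m ! * (2 * Fintype.card ι) ^ (∑ i, α i) * ∏ i, (α i)! := by
  classical
  set k := ∑ i, α i
  calc (k + m)! ≤ 2 ^ (k + m) * (k ! * m !) := factorial_add_le_two_pow_mul k m
    _ ≤ 2 ^ (k + m) * ((Fintype.card ι ^ k * ∏ i, (α i)!) * m !) := by
        gcongr; exact factorial_sum_le_card_pow_mul_prod univ α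
    _ = 2 ^ m * m ! * (2 * Fintype.card ι) ^ k * ∏ i, (α i)! := by ring

theorem cast_factorial_sum_add_rpow_le {ι : Type*} [Fintype ι] {s : ℝ} (hs : 0 ≤ s)
    (α : ι → ℕ) (m : ℕ) :
    (((∑ i, α i + m)! : ℕ) : ℝ) ^ s ≤ ((2 ^ m * m ! : ℕ) : ℝ) ^ s *
      (((2 * Fintype.card ι : ℕ) : ℝ) ^ s) ^ (∑ i, α i) * ((∏ i, (α i)! : ℕ) : ℝ) ^ s := by
  calc (((∑ i, α i + m)! : ℕ) : ℝ) ^ s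
      ≤ ((2 ^ m * m ! * (2 * Fintype.card ι) ^ (∑ i, α i) * ∏ i, (α i)! : ℕ) : ℝ) ^ s := by
        gcongr; exact_mod_cast factorial_sum_add_le α m
    _ = _ := by
        rw [Nat.cast_mul, Nat.cast_mul, Nat.cast_pow, mul_rpow (by positivity) (by positivity),
          mul_rpow (by positivity) (by positivity), rpow_pow_comm (by positivity)]

end Nat

theorem pow_le_one_add_sq_rpow {r : ℝ} (hr : 0 ≤ r) (k : ℕ) :
    r ^ k ≤ (1 + r ^ 2) ^ ((k : ℝ) / 2) := by
  have hsqrt : r ≤ √(1 + r ^ 2) := le_sqrt_of_sq_le (by linarith)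
  calc r ^ k ≤ √(1 + r ^ 2) ^ k := pow_le_pow_left₀ hr hsqrt k
    _ = (1 + r ^ 2) ^ ((k : ℝ) / 2) := by
        rw [sqrt_eq_rpow, ← rpow_natCast, ← rpow_mul (by positivity)]
        ring_nf

namespace EuclideanSpace

variable {ι : Type*} [Fintype ι]

theorem abs_prod_pow_le_norm_pow (ξ : EuclideanSpace ℝ ι) (α : ι → ℕ) :
    |∏ i, ξ i ^ α i| ≤ ‖ξ‖ ^ ∑ i, α i := by
  rw [abs_prod, ← prod_pow_eq_pow_sum]
  gcongr with i
  rw [abs_pow]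
  exact pow_le_pow_left₀ (abs_nonneg _) (PiLp.norm_apply_le ξ i) _

theorem norm_moment_integrand_le {g : EuclideanSpace ℝ ι → ℂ} {M : ℝ} {n : ℕ}
    (hg : ∀ ξ, ‖g ξ‖ ≤ M * (1 + ‖ξ‖ ^ 2) ^ (-(n : ℝ) / 2)) (α : ι → ℕ)
    (x ξ : EuclideanSpace ℝ ι) :
    ‖((∏ i, ξ i ^ α i : ℝ) : ℂ) * g ξ * Complex.exp (Complex.I * ((inner ℝ x ξ : ℝ) : ℂ))‖ ≤
      M * (1 + ‖ξ‖ ^ 2) ^ (-((n : ℝ) - ∑ i, α i) / 2) := by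
  have hbase : 0 < 1 + ‖ξ‖ ^ 2 := by positivity
  rw [norm_mul, norm_mul, Complex.norm_exp_I_mul_ofReal, mul_one, Complex.norm_real,
    Real.norm_eq_abs]
  calc |∏ i, ξ i ^ α i| * ‖g ξ‖
      ≤ (1 + ‖ξ‖ ^ 2) ^ ((∑ i, α i : ℕ) / 2 : ℝ) * (M * (1 + ‖ξ‖ ^ 2) ^ (-(n : ℝ) / 2)) :=
        mul_le_mul ((abs_prod_pow_le_norm_pow ξ α).trans (pow_le_one_add_sq_rpow (norm_nonneg ξ) _))
          (hg ξ) (norm_nonneg _) (by positivity)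
    _ = M * (1 + ‖ξ‖ ^ 2) ^ (-((n : ℝ) - ∑ i, α i) / 2) := by
        rw [mul_left_comm, ← rpow_add hbase]
        push_cast
        ring_nf

theorem norm_moment_integral_le {g : EuclideanSpace ℝ ι → ℂ} {M : ℝ} (α : ι → ℕ)
    (hg : ∀ ξ, ‖g ξ‖ ≤ M * (1 + ‖ξ‖ ^ 2) ^ (-((∑ i, α i + Fintype.card ι + 1 : ℕ) : ℝ) / 2))
    (x : EuclideanSpace ℝ ι) :
    ‖∫ ξ : EuclideanSpace ℝ ι,
        ((∏ i, ξ i ^ α i : ℝ) : ℂ) * g ξ * Complex.exp (Complex.I * ((inner ℝ x ξ : ℝ) : ℂ))‖ ≤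
      M * ∫ ξ : EuclideanSpace ℝ ι, (1 + ‖ξ‖ ^ 2) ^ (-((Fintype.card ι : ℝ) + 1) / 2) := by
  have hdim : (Module.finrank ℝ (EuclideanSpace ℝ ι) : ℝ) < Fintype.card ι + 1 := by
    simp
  rw [← integral_const_mul]
  refine norm_integral_le_of_norm_le ((integrable_rpow_neg_one_add_norm_sq hdim).const_mul M)
    (Filter.Eventually.of_forall fun ξ ↦ ?_)
  convert norm_moment_integrand_le hg α x ξ using 4
  push_cast
  ring

end EuclideanSpace

theorem mul_pow_le_max_one_mul_max_one_pow (K : ℝ) {L : ℝ} (hL : 0 ≤ L) (k : ℕ) :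
    K * L ^ k ≤ (max K 1 * max L 1) ^ (k + 1) := by
  rw [mul_pow]
  gcongr
  · exact (le_max_left K 1).trans (le_self_pow₀ (le_max_right K 1) k.succ_ne_zero)
  · exact (pow_le_pow_left₀ hL (le_max_left L 1) k).trans
      (pow_le_pow_right₀ (le_max_right L 1) k.le_succ)

/-- If `|g(ξ)| ≤ C^{n+1} n!^s ⟨ξ⟩^{-n}` for all `n ≤ N`, then for every multi-index `α` with
`|α| + d + 1 ≤ N`, `|∫ ξ^α g(ξ) e^{i⟨x,ξ⟩} dξ| ≤ C₁^{|α|+1} α!^s`, where `C₁` depends only on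
`C`, `d`, `s` but not on `N`. -/
theorem moment_integral_gevrey_bound (d : ℕ) (s C : ℝ) (hs : 0 < s) (hC : 0 < C) :
    ∃ C₁ : ℝ, 0 < C₁ ∧
      ∀ (N : ℕ) (g : EuclideanSpace ℝ (Fin d) → ℂ), Measurable g →
        (∀ n : ℕ, n ≤ N → ∀ ξ : EuclideanSpace ℝ (Fin d),
          ‖g ξ‖ ≤ C ^ (n + 1) * ((n.factorial : ℕ) : ℝ) ^ s * (1 + ‖ξ‖ ^ 2) ^ (-(n : ℝ) / 2)) →
        ∀ α : Fin d → ℕ, (∑ i, α i) + d + 1 ≤ N →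
          ∀ x : EuclideanSpace ℝ (Fin d),
            ‖∫ ξ : EuclideanSpace ℝ (Fin d),
                ((∏ i, (ξ i) ^ (α i) : ℝ) : ℂ) * g ξ *
                  Complex.exp (Complex.I * ((inner ℝ x ξ : ℝ) : ℂ))‖ ≤
              C₁ ^ ((∑ i, α i) + 1) * ((∏ i, (α i).factorial : ℕ) : ℝ) ^ s := by
  set C' := max C 1
  set I := ∫ ξ : EuclideanSpace ℝ (Fin d), (1 + ‖ξ‖ ^ 2) ^ (-((d : ℝ) + 1) / 2)
  have hI : 0 ≤ I := integral_nonneg fun ξ ↦ by positivity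
  set K := C' ^ (d + 2) * ((2 ^ (d + 1) * (d + 1)! : ℕ) : ℝ) ^ s * I
  set L := C' * ((2 * d : ℕ) : ℝ) ^ s
  refine ⟨max K 1 * max L 1, by positivity, fun N g _ hg α hα x ↦ ?_⟩
  set k := ∑ i, α i
  have hmoment := EuclideanSpace.norm_moment_integral_le α (hg _ (by simpa using hα)) x
  have hfact := Nat.cast_factorial_sum_add_rpow_le hs.le α (d + 1)
  simp only [Fintype.card_fin, ← add_assoc] at hmoment hfact
  have hC' : C ^ (k + d + 1 + 1) ≤ C' ^ (d + 2) * C' ^ k := by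
    rw [← pow_add, add_comm (d + 2), add_assoc, add_assoc]
    exact pow_le_pow_left₀ hC.le (le_max_left C 1) _
  calc _ ≤ C ^ (k + d + 1 + 1) * (((k + d + 1)! : ℕ) : ℝ) ^ s * I := hmoment
    _ ≤ C' ^ (d + 2) * C' ^ k * (((2 ^ (d + 1) * (d + 1)! : ℕ) : ℝ) ^ s *
          (((2 * d : ℕ) : ℝ) ^ s) ^ k * ((∏ i, (α i)! : ℕ) : ℝ) ^ s) * I := by
        gcongr
    _ = K * L ^ k * ((∏ i, (α i)! : ℕ) : ℝ) ^ s := by ring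
    _ ≤ _ := by
        gcongr
        exact mul_pow_le_max_one_mul_max_one_pow K (by positivity) k
end
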